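/- arXiv:2412.12454 — 5 statements merged into one kernel-verified Lean document; each statement's English description precedes it below -/
import Mathlib

section
/- Let k, n ≥ 10, b ≥ 1 and a_1, …, a_n be positive integers with a_j ≤ b for all j and Σ_j a_j = k·b, and let G, t be the associated construction. Then every optimal clustering 𝒞 of G has exactly k parts, and each part of 𝒞 contains exactly one of the sets B_1, …, B_k (i.e., each part is a superset of exactly one B_i and no part contains two of them). -/
open Finset

universe u

namespace ClusterEditing




variable {V : Type u}

/-- Cost of a partition `P` of the finset `X` with respect to `G`: the number of
edges of `G` within `X` whose endpoints lie in different parts, plus the number of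
non-adjacent pairs of distinct vertices lying in the same part. -/
noncomputable def costOn [DecidableEq V] (G : SimpleGraph V) (X : Finset V) (P : Finpartition X) : ℕ :=
  {e : Sym2 V | e ∈ G.edgeSet ∧ (∀ v ∈ e, v ∈ X) ∧ ¬ ∃ C ∈ P.parts, ∀ v ∈ e, v ∈ C}.ncard +
  {e : Sym2 V | e ∈ Gᶜ.edgeSet ∧ ∃ C ∈ P.parts, ∀ v ∈ e, v ∈ C}.ncard

/-- Cost of a clustering (a partition of the whole vertex set). -/
noncomputable def cost [Fintype V] [DecidableEq V] (G : SimpleGraph V)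
    (P : Finpartition (univ : Finset V)) : ℕ :=
  costOn G univ P

/-- An optimal clustering: one of minimum cost. -/
def IsOptimal [Fintype V] [DecidableEq V] (G : SimpleGraph V)
    (P : Finpartition (univ : Finset V)) : Prop :=
  ∀ Q : Finpartition (univ : Finset V), cost G P ≤ cost G Q

/-- Number of (ordered) adjacent pairs `(u, v)` with `u ∈ S`, `v ∈ T`. -/
noncomputable def eBetween (G : SimpleGraph V) (S T : Finset V) : ℕ :=
  {p : V × V | p.1 ∈ S ∧ p.2 ∈ T ∧ G.Adj p.1 p.2}.ncard

/-- Number of non-adjacent pairs between `S` and `T`. -/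
noncomputable def nonEBetween (G : SimpleGraph V) (S T : Finset V) : ℕ :=
  S.card * T.card - eBetween G S T





/-- Vertex type for the hardness construction: `k` cliques `B i` of size `h`
and `n` cliques `A j` of size `a j`. -/
abbrev BinV (k h n : ℕ) (a : Fin n → ℕ) : Type :=
  (Fin k × Fin h) ⊕ ((j : Fin n) × Fin (a j))

/-- Two vertices lie in the same `B i`, or the same `A j`, or on different sides. -/
def sameSide {k h n : ℕ} {a : Fin n → ℕ} : BinV k h n a → BinV k h n a → Prop
  | Sum.inl x, Sum.inl y => x.1 = y.1
  | Sum.inr x, Sum.inr y => x.1 = y.1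
  | _, _ => True

/-- The construction: the join of the cluster graph `B 1 ∪ ⋯ ∪ B k`
(cliques of size `h`) with the cluster graph `A 1 ∪ ⋯ ∪ A n` (cliques of sizes `a j`). -/
def binGraph (k h n : ℕ) (a : Fin n → ℕ) : SimpleGraph (BinV k h n a) where
  Adj u v := u ≠ v ∧ sameSide u v
  symm := by
    refine ⟨?_⟩
    rintro u v ⟨h1, h2⟩
    refine ⟨h1.symm, ?_⟩
    cases u with
    | inl x =>
      cases v with
      | inl y => exact ((h2 : x.1 = y.1)).symm
      | inr y => trivial
    | inr x =>
      cases v with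
      | inl y => trivial
      | inr y => exact ((h2 : x.1 = y.1)).symm
  loopless := ⟨by rintro u ⟨h1, _⟩; exact h1 rfl⟩

def Bset (k h n : ℕ) (a : Fin n → ℕ) (i : Fin k) : Finset (BinV k h n a) :=
  (univ : Finset (Fin h)).image fun x => Sum.inl (i, x)

def Aset (k h n : ℕ) (a : Fin n → ℕ) (j : Fin n) : Finset (BinV k h n a) :=
  (univ : Finset (Fin (a j))).image fun x => Sum.inr ⟨j, x⟩


/-! ### Auxiliary machinery -/

abbrev sym2mk {W : Type*} (p : W × W) : Sym2 W := Sym2.mk p.1 p.2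

section Generic
variable [Fintype V] [DecidableEq V]

open scoped Classical in
/-- Cut edges. -/
noncomputable def F1 (G : SimpleGraph V) (P : Finpartition (univ : Finset V)) :
    Finset (Sym2 V) :=
  univ.filter fun e => e ∈ G.edgeSet ∧ ¬ ∃ C ∈ P.parts, ∀ v ∈ e, v ∈ C

open scoped Classical in
/-- Non-edges within a part. -/
noncomputable def F2 (G : SimpleGraph V) (P : Finpartition (univ : Finset V)) :
    Finset (Sym2 V) :=
  univ.filter fun e => e ∈ Gᶜ.edgeSet ∧ ∃ C ∈ P.parts, ∀ v ∈ e, v ∈ C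

lemma mem_F1 {G : SimpleGraph V} {P : Finpartition (univ : Finset V)} {e : Sym2 V} :
    e ∈ F1 G P ↔ e ∈ G.edgeSet ∧ ¬ ∃ C ∈ P.parts, ∀ v ∈ e, v ∈ C := by
  classical
  simp [F1]

lemma mem_F2 {G : SimpleGraph V} {P : Finpartition (univ : Finset V)} {e : Sym2 V} :
    e ∈ F2 G P ↔ e ∈ Gᶜ.edgeSet ∧ ∃ C ∈ P.parts, ∀ v ∈ e, v ∈ C := by
  classical
  simp [F2]

lemma cost_eq_F1_F2 (G : SimpleGraph V) (P : Finpartition (univ : Finset V)) :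
    cost G P = (F1 G P).card + (F2 G P).card := by
  classical
  unfold cost costOn
  congr 1
  · rw [Set.ncard_eq_toFinset_card']
    apply Finset.card_bij (fun e _ => e)
    · intro e he
      rw [Set.mem_toFinset] at he
      rw [mem_F1]
      exact ⟨he.1, he.2.2⟩
    · intro _ _ _ _ h; exact h
    · intro e he
      rw [mem_F1] at he
      exact ⟨e, by rw [Set.mem_toFinset]; exact ⟨he.1, fun v _ => mem_univ v, he.2⟩, rfl⟩
  · rw [Set.ncard_eq_toFinset_card']
    apply Finset.card_bij (fun e _ => e)
    · intro e he
      rw [Set.mem_toFinset] at he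
      rw [mem_F2]
      exact he
    · intro _ _ _ _ h; exact h
    · intro e he
      rw [mem_F2] at he
      exact ⟨e, by rw [Set.mem_toFinset]; exact he, rfl⟩

lemma both_mem_iff (P : Finpartition (univ : Finset V)) (u v : V) :
    (∃ C ∈ P.parts, ∀ x ∈ (s(u, v) : Sym2 V), x ∈ C) ↔ P.part u = P.part v := by
  constructor
  · rintro ⟨C, hC, h⟩
    have hu : u ∈ C := h u (by simp)
    have hv : v ∈ C := h v (by simp)
    rw [P.part_eq_of_mem hC hu, P.part_eq_of_mem hC hv]
  · intro h
    refine ⟨P.part u, P.part_mem.2 (mem_univ u), ?_⟩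
    intro x hx
    rw [Sym2.mem_iff] at hx
    rcases hx with rfl | rfl
    · exact P.mem_part (mem_univ x)
    · rw [h]; exact P.mem_part (mem_univ x)

/-- Sum over parts of the sizes of intersections with a fixed set. -/
lemma sum_inter_parts (P : Finpartition (univ : Finset V)) (S : Finset V) :
    ∑ C ∈ P.parts, (S ∩ C).card = S.card := by
  have hU : S = P.parts.biUnion (fun C => S ∩ C) := by
    ext v
    simp only [Finset.mem_biUnion, Finset.mem_inter]
    constructor
    · intro hv
      exact ⟨P.part v, P.part_mem.2 (mem_univ v), hv, P.mem_part (mem_univ v)⟩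
    · rintro ⟨C, _, hv, _⟩; exact hv
  conv_rhs => rw [hU]
  rw [Finset.card_biUnion]
  intro C hC D hD hCD
  have := P.disjoint hC hD hCD
  change Disjoint C D at this
  exact (this.mono inter_subset_right inter_subset_right)

lemma injOn_sym2mk {S T : Finset V} (hd : Disjoint S T) :
    Set.InjOn sym2mk ((S ×ˢ T : Finset (V × V)) : Set (V × V)) := by
  rintro ⟨u, v⟩ h1 ⟨u', v'⟩ h2 h
  simp only [Finset.coe_product, Set.mem_prod, Finset.mem_coe] at h1 h2
  rw [Sym2.eq_iff] at h
  rcases h with ⟨rfl, rfl⟩ | ⟨rfl, rfl⟩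
  · rfl
  · exact ((Finset.disjoint_left.1 hd h1.1 h2.2).elim)

end Generic
section Construction

variable {k h n : ℕ} {a : Fin n → ℕ}

/-- The `B`-index of a vertex, if any. -/
def fB : BinV k h n a → Option (Fin k)
  | Sum.inl (i, _) => some i
  | Sum.inr _ => none

def Ball (k h n : ℕ) (a : Fin n → ℕ) : Finset (BinV k h n a) :=
  (univ : Finset (Fin k × Fin h)).image Sum.inl

def Aall (k h n : ℕ) (a : Fin n → ℕ) : Finset (BinV k h n a) :=
  (univ : Finset ((j : Fin n) × Fin (a j))).image Sum.inr

lemma mem_Ball {v : BinV k h n a} : v ∈ Ball k h n a ↔ v.isLeft := by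
  cases v <;> simp [Ball]

lemma mem_Aall {v : BinV k h n a} : v ∈ Aall k h n a ↔ v.isRight := by
  cases v <;> simp [Aall]

lemma card_Ball : (Ball k h n a).card = k * h := by
  rw [Ball, Finset.card_image_of_injective _ Sum.inl_injective, card_univ,
    Fintype.card_prod, Fintype.card_fin, Fintype.card_fin]

lemma card_Aall : (Aall k h n a).card = ∑ j, a j := by
  rw [Aall, Finset.card_image_of_injective _ Sum.inr_injective, card_univ,
    Fintype.card_sigma]
  simp

lemma mem_Bset {v : BinV k h n a} {i : Fin k} : v ∈ Bset k h n a i ↔ fB v = some i := by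
  cases v with
  | inl p =>
    obtain ⟨i', x⟩ := p
    simp only [Bset, Finset.mem_image, mem_univ, true_and, fB, Option.some_inj]
    constructor
    · rintro ⟨y, hy⟩
      have := congrArg (Sum.elim Prod.fst (fun _ => i)) hy
      simpa using this.symm
    · rintro rfl
      exact ⟨x, rfl⟩
  | inr q => simp [Bset, fB]

lemma card_Bset (i : Fin k) : (Bset k h n a i).card = h := by
  rw [Bset, Finset.card_image_of_injective, card_univ, Fintype.card_fin]
  intro x y hxy
  simpa using hxy

lemma Bset_subset_Ball (i : Fin k) : Bset k h n a i ⊆ Ball k h n a := by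
  intro v hv
  rw [mem_Bset] at hv
  rw [mem_Ball]
  cases v <;> simp_all [fB]

lemma disjoint_Aall_Ball : Disjoint (Aall k h n a) (Ball k h n a) := by
  rw [Finset.disjoint_left]
  intro v hv hv'
  rw [mem_Aall] at hv; rw [mem_Ball] at hv'
  cases v <;> simp_all

lemma adj_of_sides {p : Fin k × Fin h} {q : (j : Fin n) × Fin (a j)} :
    (binGraph k h n a).Adj (Sum.inl p) (Sum.inr q) := by
  exact ⟨by simp, trivial⟩

lemma not_adj_left {p q : Fin k × Fin h} (hpq : p.1 ≠ q.1) :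
    ¬ (binGraph k h n a).Adj (Sum.inl p) (Sum.inl q) := by
  rintro ⟨_, hs⟩
  exact hpq hs

lemma adj_left {p q : Fin k × Fin h} (hpq : p ≠ q) (h1 : p.1 = q.1) :
    (binGraph k h n a).Adj (Sum.inl p) (Sum.inl q) :=
  ⟨by simpa using hpq, h1⟩

end Construction
section LB

variable {k h n : ℕ} {a : Fin n → ℕ}

def acut (C : Finset (BinV k h n a)) : Finset (Sym2 (BinV k h n a)) :=
  ((Aall k h n a ∩ C) ×ˢ (Ball k h n a \ C)).image sym2mk

def mergeO (C : Finset (BinV k h n a)) : Finset (BinV k h n a × BinV k h n a) :=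
  ((Ball k h n a ∩ C) ×ˢ (Ball k h n a ∩ C)).filter fun p => fB p.1 ≠ fB p.2

def mergeS (C : Finset (BinV k h n a)) : Finset (Sym2 (BinV k h n a)) :=
  (mergeO C).image sym2mk

def splitS (i : Fin k) (C : Finset (BinV k h n a)) : Finset (Sym2 (BinV k h n a)) :=
  ((Bset k h n a i ∩ C) ×ˢ (Bset k h n a i \ C)).image sym2mk

lemma acut_card (C : Finset (BinV k h n a)) :
    (acut C).card = (Aall k h n a ∩ C).card * (Ball k h n a \ C).card := by
  rw [acut, Finset.card_image_of_injOn, Finset.card_product]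
  exact injOn_sym2mk (disjoint_Aall_Ball.mono inter_subset_left sdiff_subset)

lemma splitS_card (i : Fin k) (C : Finset (BinV k h n a)) :
    (splitS i C).card = (Bset k h n a i ∩ C).card * (Bset k h n a i \ C).card := by
  rw [splitS, Finset.card_image_of_injOn, Finset.card_product]
  exact injOn_sym2mk ((Finset.disjoint_sdiff (s := C)).mono inter_subset_right (by rfl))

lemma mergeO_card_le (C : Finset (BinV k h n a)) :
    (mergeO C).card ≤ 2 * (mergeS C).card := by
  apply Finset.card_le_mul_card_image
  intro e _
  induction e with
  | _ x y =>
    calc ((mergeO C).filter fun p => sym2mk p = s(x, y)).card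
        ≤ ({(x, y), (y, x)} : Finset (BinV k h n a × BinV k h n a)).card := by
          apply Finset.card_le_card
          intro p hp
          rw [Finset.mem_filter] at hp
          have := (Sym2.mk_eq_mk_iff (p := p) (q := (x, y))).1 hp.2
          simp only [Finset.mem_insert, Finset.mem_singleton]
          rcases this with h' | h'
          · left; exact h'
          · right; rw [h']; rfl
      _ ≤ 2 := Finset.card_insert_le _ _ |>.trans (by simp)

lemma mergeO_card_ge (C : Finset (BinV k h n a)) :
    (Ball k h n a ∩ C).card * ((Ball k h n a ∩ C).card - h) ≤ (mergeO C).card := by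
  classical
  set S := Ball k h n a ∩ C with hS
  have hdecomp : mergeO C =
      S.biUnion (fun w => ((S.filter fun w' => fB w ≠ fB w').image (Prod.mk w))) := by
    ext p
    obtain ⟨x, y⟩ := p
    simp only [mergeO, Finset.mem_filter, Finset.mem_product, Finset.mem_biUnion,
      Finset.mem_image, Prod.mk.injEq, ← hS]
    constructor
    · rintro ⟨⟨hx, hy⟩, hne⟩
      exact ⟨x, hx, y, ⟨hy, hne⟩, rfl, rfl⟩
    · rintro ⟨w, hw, w', ⟨hw', hne⟩, rfl, rfl⟩
      exact ⟨⟨hw, hw'⟩, hne⟩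
  rw [hdecomp, Finset.card_biUnion]
  · have hbound : ∀ w ∈ S, S.card - h ≤ ((S.filter fun w' => fB w ≠ fB w').image (Prod.mk w)).card := by
      intro w hw
      rw [Finset.card_image_of_injective _ (fun x y hxy => by simpa using congrArg Prod.snd hxy)]
      have hsplit := Finset.card_filter_add_card_filter_not
        (s := S) (p := fun w' => fB w ≠ fB w')
      have hco : (S.filter fun w' => ¬ fB w ≠ fB w').card ≤ h := by
        have hwB : w ∈ Ball k h n a := (Finset.mem_inter.1 (hS ▸ hw)).1
        rw [mem_Ball] at hwB
        obtain ⟨p, rfl⟩ := Sum.isLeft_iff.1 hwB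
        calc (S.filter fun w' => ¬ fB (Sum.inl p) ≠ fB w').card
            ≤ (Bset k h n a p.1).card := by
              apply Finset.card_le_card
              intro w' hw'
              rw [Finset.mem_filter, not_ne_iff] at hw'
              rw [mem_Bset, ← hw'.2]
              rfl
          _ = h := card_Bset p.1
      omega
    calc S.card * (S.card - h) = ∑ _w ∈ S, (S.card - h) := by
          rw [Finset.sum_const, smul_eq_mul]
      _ ≤ _ := Finset.sum_le_sum hbound
  · intro w hw w' hw' hne
    rw [Function.onFun, Finset.disjoint_left]
    rintro p hp hp'
    rw [Finset.mem_image] at hp hp'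
    obtain ⟨_, _, rfl⟩ := hp
    obtain ⟨_, _, heq⟩ := hp'
    exact hne (congrArg Prod.fst heq).symm

lemma merge_card_ge (C : Finset (BinV k h n a)) :
    (Ball k h n a ∩ C).card * ((Ball k h n a ∩ C).card - h) ≤ 2 * (mergeS C).card :=
  (mergeO_card_ge C).trans (mergeO_card_le C)

variable (P : Finpartition (univ : Finset (BinV k h n a)))

lemma acut_subset_F1 {C : Finset (BinV k h n a)} (hC : C ∈ P.parts) :
    acut C ⊆ F1 (binGraph k h n a) P := by
  intro e he
  rw [acut, Finset.mem_image] at he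
  obtain ⟨⟨u, v⟩, hp, rfl⟩ := he
  rw [Finset.mem_product, Finset.mem_inter, Finset.mem_sdiff] at hp
  obtain ⟨⟨huA, huC⟩, hvB, hvC⟩ := hp
  obtain ⟨q, rfl⟩ : ∃ q, u = Sum.inr q := by
    cases u with
    | inl p => rw [mem_Aall] at huA; simp at huA
    | inr q => exact ⟨q, rfl⟩
  obtain ⟨p, rfl⟩ : ∃ p, v = Sum.inl p := by
    cases v with
    | inl p => exact ⟨p, rfl⟩
    | inr q' => rw [mem_Ball] at hvB; simp at hvB
  rw [mem_F1]
  constructor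
  · rw [SimpleGraph.mem_edgeSet]
    exact adj_of_sides.symm
  · rw [both_mem_iff]
    intro heq
    have h1 : P.part (Sum.inr q : BinV k h n a) = C := P.part_eq_of_mem hC huC
    have h2 := P.mem_part (a := (Sum.inl p : BinV k h n a)) (mem_univ _)
    rw [← heq, h1] at h2
    exact hvC h2

lemma splitS_subset_F1 {C : Finset (BinV k h n a)} (hC : C ∈ P.parts) (i : Fin k) :
    splitS i C ⊆ F1 (binGraph k h n a) P := by
  intro e he
  rw [splitS, Finset.mem_image] at he
  obtain ⟨⟨u, v⟩, hp, rfl⟩ := he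
  rw [Finset.mem_product, Finset.mem_inter, Finset.mem_sdiff] at hp
  obtain ⟨⟨huB, huC⟩, hvB, hvC⟩ := hp
  rw [mem_F1]
  have hne : u ≠ v := fun h' => hvC (h' ▸ huC)
  rw [mem_Bset] at huB hvB
  obtain ⟨p, rfl⟩ : ∃ p, u = Sum.inl p := by
    cases u with
    | inl p => exact ⟨p, rfl⟩
    | inr q => simp [fB] at huB
  obtain ⟨p', rfl⟩ : ∃ p', v = Sum.inl p' := by
    cases v with
    | inl p' => exact ⟨p', rfl⟩
    | inr q => simp [fB] at hvB
  constructor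
  · rw [SimpleGraph.mem_edgeSet]
    refine adj_left (by simpa using hne) ?_
    have : (some p.1 : Option (Fin k)) = some p'.1 := by
      rw [show (some p.1 : Option (Fin k)) = fB (Sum.inl p : BinV k h n a) from rfl, huB, ← hvB]
      rfl
    simpa using this
  · rw [both_mem_iff]
    intro heq
    have h1 : P.part (Sum.inl p : BinV k h n a) = C := P.part_eq_of_mem hC huC
    have h2 := P.mem_part (a := (Sum.inl p' : BinV k h n a)) (mem_univ _)
    rw [← heq, h1] at h2
    exact hvC h2

lemma mergeS_subset_F2 {C : Finset (BinV k h n a)} (hC : C ∈ P.parts) :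
    mergeS C ⊆ F2 (binGraph k h n a) P := by
  intro e he
  rw [mergeS, Finset.mem_image] at he
  obtain ⟨⟨u, v⟩, hp, rfl⟩ := he
  rw [mergeO, Finset.mem_filter, Finset.mem_product, Finset.mem_inter, Finset.mem_inter] at hp
  obtain ⟨⟨⟨huB, huC⟩, hvB, hvC⟩, hne⟩ := hp
  rw [mem_F2]
  constructor
  · rw [SimpleGraph.mem_edgeSet, SimpleGraph.compl_adj]
    refine ⟨fun h' => hne (h' ▸ rfl), ?_⟩
    rw [mem_Ball] at huB hvB
    obtain ⟨p, rfl⟩ := Sum.isLeft_iff.1 huB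
    obtain ⟨p', rfl⟩ := Sum.isLeft_iff.1 hvB
    apply not_adj_left
    intro h1
    apply hne
    show some p.1 = some p'.1
    rw [h1]
  · refine ⟨C, hC, ?_⟩
    intro x hx
    rw [Sym2.mem_iff] at hx
    rcases hx with rfl | rfl
    · exact huC
    · exact hvC

end LB
section LB2

variable {k h n : ℕ} {a : Fin n → ℕ} (P : Finpartition (univ : Finset (BinV k h n a)))

lemma notRL {x : BinV k h n a} (h1 : x ∈ Aall k h n a) (h2 : x ∈ Ball k h n a) : False :=
  Finset.disjoint_left.1 disjoint_Aall_Ball h1 h2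

lemma acut_pairwise_disjoint {C C' : Finset (BinV k h n a)} (hC : C ∈ P.parts)
    (hC' : C' ∈ P.parts) (hne : C ≠ C') : Disjoint (acut C) (acut C') := by
  rw [Finset.disjoint_left]
  intro e he he'
  rw [acut, Finset.mem_image] at he he'
  obtain ⟨⟨u, v⟩, hp, rfl⟩ := he
  obtain ⟨⟨u', v'⟩, hp', heq⟩ := he'
  rw [Finset.mem_product, Finset.mem_inter, Finset.mem_sdiff] at hp hp'
  rw [Sym2.eq_iff] at heq
  rcases heq with ⟨h1, _⟩ | ⟨h1, h2⟩
  · exact hne (P.eq_of_mem_parts hC hC' hp.1.2 (h1 ▸ hp'.1.2))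
  · exact notRL (h1 ▸ hp'.1.1) hp.2.1

lemma mergeS_pairwise_disjoint {C C' : Finset (BinV k h n a)} (hC : C ∈ P.parts)
    (hC' : C' ∈ P.parts) (hne : C ≠ C') : Disjoint (mergeS C) (mergeS C') := by
  rw [Finset.disjoint_left]
  intro e he he'
  rw [mergeS, Finset.mem_image] at he he'
  obtain ⟨⟨u, v⟩, hp, rfl⟩ := he
  obtain ⟨⟨u', v'⟩, hp', heq⟩ := he'
  rw [mergeO, Finset.mem_filter, Finset.mem_product, Finset.mem_inter, Finset.mem_inter] at hp hp'
  rw [Sym2.eq_iff] at heq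
  have huC : u ∈ C := hp.1.1.2
  have huC' : u ∈ C' := by
    rcases heq with ⟨h1, _⟩ | ⟨_, h2⟩
    · rw [← show u' = u from h1]; exact hp'.1.1.2
    · rw [← show v' = u from h2]; exact hp'.1.2.2
  exact hne (P.eq_of_mem_parts hC hC' huC huC')

lemma splitS_disjoint_acut (i : Fin k) (C₀ C : Finset (BinV k h n a)) :
    Disjoint (splitS i C₀) (acut C) := by
  rw [Finset.disjoint_left]
  intro e he he'
  rw [splitS, Finset.mem_image] at he
  rw [acut, Finset.mem_image] at he'
  obtain ⟨⟨u, v⟩, hp, rfl⟩ := he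
  obtain ⟨⟨u', v'⟩, hp', heq⟩ := he'
  rw [Finset.mem_product, Finset.mem_inter, Finset.mem_sdiff] at hp hp'
  have huB : u ∈ Ball k h n a := Bset_subset_Ball i hp.1.1
  have hvB : v ∈ Ball k h n a := Bset_subset_Ball i hp.2.1
  rw [Sym2.eq_iff] at heq
  rcases heq with ⟨h1, _⟩ | ⟨h1, _⟩
  · exact notRL hp'.1.1 (h1 ▸ huB)
  · exact notRL hp'.1.1 (h1 ▸ hvB)

lemma F1_lb {C₀ : Finset (BinV k h n a)} (hC₀ : C₀ ∈ P.parts) (i₀ : Fin k) :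
    (∑ C ∈ P.parts, (acut C).card) + (splitS i₀ C₀).card
      ≤ (F1 (binGraph k h n a) P).card := by
  rw [← Finset.card_biUnion (fun C hC D hD hne => acut_pairwise_disjoint P hC hD hne)]
  rw [← Finset.card_union_of_disjoint]
  · apply Finset.card_le_card
    apply Finset.union_subset
    · intro e he
      rw [Finset.mem_biUnion] at he
      obtain ⟨C, hC, he⟩ := he
      exact acut_subset_F1 P hC he
    · exact splitS_subset_F1 P hC₀ i₀
  · rw [Finset.disjoint_right]
    intro e he he'
    rw [Finset.mem_biUnion] at he'
    obtain ⟨C, _, he'⟩ := he'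
    exact Finset.disjoint_left.1 (splitS_disjoint_acut i₀ C₀ C) he he'

lemma F2_lb : (∑ C ∈ P.parts, (mergeS C).card) ≤ (F2 (binGraph k h n a) P).card := by
  rw [← Finset.card_biUnion (fun C hC D hD hne => mergeS_pairwise_disjoint P hC hD hne)]
  apply Finset.card_le_card
  intro e he
  rw [Finset.mem_biUnion] at he
  obtain ⟨C, hC, he⟩ := he
  exact mergeS_subset_F2 P hC he

end LB2
section UB

lemma part_ofSetoid_eq_iff {α : Type*} [Fintype α] [DecidableEq α] (s : Setoid α)
    [DecidableRel s.r] (u v : α) :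
    (Finpartition.ofSetoid s).part u = (Finpartition.ofSetoid s).part v ↔ s.r u v := by
  constructor
  · intro h
    apply (Finpartition.mem_part_ofSetoid_iff_rel (s := s) (a := u) (b := v)).1
    rw [h]
    exact (Finpartition.ofSetoid s).mem_part (mem_univ v)
  · intro h
    exact Finpartition.part_eq_of_mem _
      ((Finpartition.ofSetoid s).part_mem.2 (mem_univ v))
      ((Finpartition.mem_part_ofSetoid_iff_rel (s := s)).2 (s.iseqv.symm h))

variable {k h n : ℕ} {a : Fin n → ℕ}

/-- Reference clustering function: all of `A` goes with `B i0`. -/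
def fQ (i0 : Fin k) : BinV k h n a → Fin k
  | Sum.inl (i, _) => i
  | Sum.inr _ => i0

lemma cost_ub (i0 : Fin k) (hk : 1 ≤ k) :
    ∃ Q : Finpartition (univ : Finset (BinV k h n a)),
      cost (binGraph k h n a) Q ≤ (∑ j, a j) * ((k - 1) * h) + (∑ j, a j) * (∑ j, a j) := by
  classical
  letI : DecidableRel (Setoid.ker (fQ (h := h) (n := n) (a := a) i0)).r :=
    fun u v => decidable_of_iff (fQ i0 u = fQ i0 v) Iff.rfl
  set Q := Finpartition.ofSetoid (Setoid.ker (fQ (h := h) (n := n) (a := a) i0)) with hQ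
  have hsame : ∀ u v : BinV k h n a,
      (∃ C ∈ Q.parts, ∀ x ∈ (s(u, v) : Sym2 (BinV k h n a)), x ∈ C) ↔ fQ i0 u = fQ i0 v := by
    intro u v
    rw [both_mem_iff, hQ, part_ofSetoid_eq_iff]
    rfl
  refine ⟨Q, ?_⟩
  rw [cost_eq_F1_F2]
  have hF1 : F1 (binGraph k h n a) Q ⊆
      ((Aall k h n a ×ˢ (Ball k h n a \ Bset k h n a i0)).image sym2mk) := by
    intro e he
    induction e with
    | _ x y =>
      rw [mem_F1, SimpleGraph.mem_edgeSet] at he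
      obtain ⟨⟨hne, hss⟩, hnsame⟩ := he
      rw [hsame] at hnsame
      cases x with
      | inl p =>
        cases y with
        | inl q =>
          exact absurd (congrArg some (hss : p.1 = q.1)) (by simpa [fQ] using hnsame)
        | inr y' =>
          have hp : p.1 ≠ i0 := by simpa [fQ] using hnsame
          rw [Finset.mem_image]
          refine ⟨(Sum.inr y', Sum.inl p), ?_, Sym2.eq_swap⟩
          rw [Finset.mem_product, Finset.mem_sdiff]
          refine ⟨by rw [mem_Aall]; rfl, by rw [mem_Ball]; rfl, ?_⟩
          rw [mem_Bset]
          simpa [fB] using hp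
      | inr x' =>
        cases y with
        | inl q =>
          have hq : q.1 ≠ i0 := by
            intro hq'
            exact hnsame (by simp [fQ, hq'])
          rw [Finset.mem_image]
          refine ⟨(Sum.inr x', Sum.inl q), ?_, rfl⟩
          rw [Finset.mem_product, Finset.mem_sdiff]
          refine ⟨by rw [mem_Aall]; rfl, by rw [mem_Ball]; rfl, ?_⟩
          rw [mem_Bset]
          simpa [fB] using hq
        | inr y' => exact absurd (rfl : fQ (h := h) (n := n) (a := a) i0 (Sum.inr x') = fQ i0 (Sum.inr y')) hnsame
  have hF2 : F2 (binGraph k h n a) Q ⊆ ((Aall k h n a ×ˢ Aall k h n a).image sym2mk) := by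
    intro e he
    induction e with
    | _ x y =>
      rw [mem_F2, SimpleGraph.mem_edgeSet, SimpleGraph.compl_adj] at he
      obtain ⟨⟨hne, hnadj⟩, hsame'⟩ := he
      rw [hsame] at hsame'
      have hnss : ¬ sameSide x y := fun hss => hnadj ⟨hne, hss⟩
      cases x with
      | inl p =>
        cases y with
        | inl q =>
          exact absurd (show sameSide (Sum.inl p : BinV k h n a) (Sum.inl q) from
            by simpa [fQ, sameSide] using hsame') hnss
        | inr y' => exact absurd trivial hnss
      | inr x' =>
        cases y with
        | inl q => exact absurd trivial hnss
        | inr y' =>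
          rw [Finset.mem_image]
          refine ⟨(Sum.inr x', Sum.inr y'), ?_, rfl⟩
          rw [Finset.mem_product]
          exact ⟨by rw [mem_Aall]; rfl, by rw [mem_Aall]; rfl⟩
  have h1 : (F1 (binGraph k h n a) Q).card ≤ (∑ j, a j) * ((k - 1) * h) := by
    calc (F1 (binGraph k h n a) Q).card
        ≤ ((Aall k h n a ×ˢ (Ball k h n a \ Bset k h n a i0)).image sym2mk).card :=
          Finset.card_le_card hF1
      _ ≤ (Aall k h n a ×ˢ (Ball k h n a \ Bset k h n a i0)).card :=
          Finset.card_image_le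
      _ = (∑ j, a j) * ((k - 1) * h) := by
          rw [Finset.card_product, card_Aall, Finset.card_sdiff_of_subset (Bset_subset_Ball i0),
            card_Ball, card_Bset]
          congr 1
          rw [Nat.sub_mul, one_mul]
  have h2 : (F2 (binGraph k h n a) Q).card ≤ (∑ j, a j) * (∑ j, a j) := by
    calc (F2 (binGraph k h n a) Q).card
        ≤ ((Aall k h n a ×ˢ Aall k h n a).image sym2mk).card := Finset.card_le_card hF2
      _ ≤ (Aall k h n a ×ˢ Aall k h n a).card := Finset.card_image_le
      _ = (∑ j, a j) * (∑ j, a j) := by rw [Finset.card_product, card_Aall]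
  omega

end UB
section Arith

lemma perpart_base (α β M H A : ℕ) (hα : α ≤ A) (hβM : β ≤ M) (h2A : 2 * A ≤ H) :
    2 * (α * (M - H)) ≤ 2 * (α * (M - β)) + β * (β - H) := by
  rcases le_or_gt β H with hle | hlt
  · have h0 : β - H = 0 := by omega
    rw [h0, Nat.mul_zero, Nat.add_zero]
    exact Nat.mul_le_mul_left 2 (Nat.mul_le_mul_left α (Nat.sub_le_sub_left hle M))
  · obtain ⟨e, he⟩ : ∃ e, β = H + e := ⟨β - H, by omega⟩
    obtain ⟨x, hx⟩ : ∃ x, M = β + x := ⟨M - β, by omega⟩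
    have h1 : M - H = e + x := by omega
    have h2 : M - β = x := by omega
    have h3 : β - H = e := by omega
    rw [h1, h2, h3, he]
    have key : 2 * α ≤ H + e := by omega
    calc 2 * (α * (e + x)) = 2 * (α * x) + (2 * α) * e := by ring
      _ ≤ 2 * (α * x) + (H + e) * e := Nat.add_le_add_left (Nat.mul_le_mul_right e key) _
      _ = 2 * (α * x) + (H + e) * e := rfl

lemma perpart_pen (α β M H A : ℕ) (hα : α ≤ A) (hβM : β ≤ M) (h2A : 2 * A ≤ H)
    (hβ2H : 2 * H ≤ β) :
    2 * (α * (M - H)) + H * H ≤ 2 * (α * (M - β)) + β * (β - H) := by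
  obtain ⟨e, he⟩ : ∃ e, β = H + e := ⟨β - H, by omega⟩
  obtain ⟨x, hx⟩ : ∃ x, M = β + x := ⟨M - β, by omega⟩
  have hHe : H ≤ e := by omega
  have h1 : M - H = e + x := by omega
  have h2 : M - β = x := by omega
  have h3 : β - H = e := by omega
  rw [h1, h2, h3, he]
  have key : 2 * α ≤ H := by omega
  calc 2 * (α * (e + x)) + H * H = 2 * (α * x) + ((2 * α) * e + H * H) := by ring
    _ ≤ 2 * (α * x) + (H * e + e * e) :=
        Nat.add_le_add_left (Nat.add_le_add (Nat.mul_le_mul_right e key)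
          (Nat.mul_le_mul hHe hHe)) _
    _ = 2 * (α * x) + (H + e) * e := by ring

lemma prod_ge (p q : ℕ) : p + q + 1 ≤ (p + 1) * (q + 1) := by
  rw [show (p + 1) * (q + 1) = p * q + (p + q + 1) from by ring]
  exact Nat.le_add_left _ _

end Arith
theorem statement0 (k n b H : ℕ) (a : Fin n → ℕ)
    (hk : 10 ≤ k) (hn : 10 ≤ n) (hb : 1 ≤ b)
    (hpos : ∀ j, 1 ≤ a j) (hub : ∀ j, a j ≤ b)
    (hsum : ∑ j, a j = k * b)
    (hH : H = (n * k * ∑ j, a j) ^ 10)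
    (𝒞 : Finpartition (univ : Finset (BinV k H n a)))
    (hopt : IsOptimal (binGraph k H n a) 𝒞) :
    𝒞.parts.card = k ∧ ∀ C ∈ 𝒞.parts, ∃! i : Fin k, Bset k H n a i ⊆ C := by
  classical
  set A := ∑ j, a j with hA
  have hA10 : 10 ≤ A := by
    rw [hsum]
    calc 10 = 10 * 1 := by ring
      _ ≤ k * b := Nat.mul_le_mul hk hb
  have hH3 : A * A * A ≤ H := by
    have h1 : A ≤ n * k * A := by
      have h2 : 1 * A ≤ n * k * A := Nat.mul_le_mul_right A (by nlinarith)
      simpa using h2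
    calc A * A * A = A ^ 3 := by ring
      _ ≤ A ^ 10 := Nat.pow_le_pow_right (by omega) (by omega)
      _ ≤ (n * k * A) ^ 10 := Nat.pow_le_pow_left h1 10
      _ = H := by rw [hH, hA]
  have hbig1 : A * A + 2 ≤ H := by nlinarith
  have h2A : 2 * A ≤ H := by nlinarith
  have hH1 : 1 ≤ H := by omega
  set D := (k - 1) * H with hD
  have hDH : D + H = k * H := by
    obtain ⟨k', rfl⟩ : ∃ k', k = k' + 1 := ⟨k - 1, by omega⟩
    rw [hD]
    simp [Nat.add_mul]
  -- upper bound on the optimal cost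
  obtain ⟨Q, hQ⟩ := cost_ub (k := k) (h := H) (n := n) (a := a) ⟨0, by omega⟩ (by omega)
  rw [← hA, ← hD] at hQ
  have hcub : cost (binGraph k H n a) 𝒞 ≤ A * D + A * A := (hopt Q).trans hQ
  -- basic cardinality facts
  have hαle : ∀ C : Finset (BinV k H n a), (Aall k H n a ∩ C).card ≤ A := fun C =>
    le_of_le_of_eq (Finset.card_le_card Finset.inter_subset_left) card_Aall
  have hβfacts : ∀ C : Finset (BinV k H n a),
      (Ball k H n a ∩ C).card + (Ball k H n a \ C).card = D + H := fun C => by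
    rw [Finset.card_inter_add_card_sdiff, card_Ball, hDH]
  -- per-part baseline bound
  have hbase : ∀ C : Finset (BinV k H n a),
      2 * ((Aall k H n a ∩ C).card * D) ≤ 2 * (acut C).card + 2 * (mergeS C).card := by
    intro C
    have hf := hβfacts C
    have h1 := perpart_base (Aall k H n a ∩ C).card (Ball k H n a ∩ C).card (D + H) H A
      (hαle C) (by omega) h2A
    have e1 : D + H - H = D := by omega
    have e2 : D + H - (Ball k H n a ∩ C).card = (Ball k H n a \ C).card := by omega
    rw [e1, e2] at h1
    refine h1.trans ?_
    rw [acut_card]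
    exact Nat.add_le_add_left (merge_card_ge C) _
  have hsumbase : ∑ C ∈ 𝒞.parts, (2 * ((Aall k H n a ∩ C).card * D)) = 2 * (D * A) := by
    calc ∑ C ∈ 𝒞.parts, (2 * ((Aall k H n a ∩ C).card * D))
        = ∑ C ∈ 𝒞.parts, ((Aall k H n a ∩ C).card * (2 * D)) :=
          Finset.sum_congr rfl fun C _ => by ring
      _ = (∑ C ∈ 𝒞.parts, (Aall k H n a ∩ C).card) * (2 * D) := by rw [Finset.sum_mul]
      _ = A * (2 * D) := by rw [sum_inter_parts, card_Aall]
      _ = 2 * (D * A) := by ring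
  -- global lower bound with split term
  have hcost2 : ∀ C₀ ∈ 𝒞.parts, ∀ i₀ : Fin k,
      (∑ C ∈ 𝒞.parts, (2 * (acut C).card + 2 * (mergeS C).card))
        + 2 * (splitS i₀ C₀).card ≤ 2 * cost (binGraph k H n a) 𝒞 := by
    intro C₀ hC₀ i₀
    have h1 := F1_lb 𝒞 hC₀ i₀
    have h2 := F2_lb 𝒞
    rw [cost_eq_F1_F2]
    have e1 : ∑ C ∈ 𝒞.parts, (2 * (acut C).card + 2 * (mergeS C).card)
        = 2 * (∑ C ∈ 𝒞.parts, (acut C).card) + 2 * (∑ C ∈ 𝒞.parts, (mergeS C).card) := by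
      rw [Finset.sum_add_distrib, Finset.mul_sum, Finset.mul_sum]
    rw [e1]
    omega
  -- lower bound with a distinguished split
  have hkey1 : ∀ C₀ ∈ 𝒞.parts, ∀ i₀ : Fin k,
      2 * (D * A) + 2 * ((Bset k H n a i₀ ∩ C₀).card * (Bset k H n a i₀ \ C₀).card)
        ≤ 2 * cost (binGraph k H n a) 𝒞 := by
    intro C₀ hC₀ i₀
    have h0 := hcost2 C₀ hC₀ i₀
    rw [splitS_card] at h0
    have hs := Finset.sum_le_sum (s := 𝒞.parts)
      (f := fun C => 2 * ((Aall k H n a ∩ C).card * D))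
      (g := fun C => 2 * (acut C).card + 2 * (mergeS C).card) (fun C _ => hbase C)
    rw [hsumbase] at hs
    linarith
  -- lower bound with an extra penalty on a distinguished part
  have hkey2 : ∀ C' ∈ 𝒞.parts, ∀ pen : ℕ,
      2 * ((Aall k H n a ∩ C').card * D) + pen
          ≤ 2 * (acut C').card + 2 * (mergeS C').card →
      2 * (D * A) + pen ≤ 2 * cost (binGraph k H n a) 𝒞 := by
    intro C' hC' pen hpen
    have h0 := hcost2 C' hC' ⟨0, by omega⟩
    have hs := Finset.sum_le_sum (s := 𝒞.parts.erase C')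
      (f := fun C => 2 * ((Aall k H n a ∩ C).card * D))
      (g := fun C => 2 * (acut C).card + 2 * (mergeS C).card)
      (fun C _ => hbase C)
    have he1 := Finset.sum_erase_add 𝒞.parts
      (fun C => 2 * ((Aall k H n a ∩ C).card * D)) hC'
    have he2 := Finset.sum_erase_add 𝒞.parts
      (fun C => 2 * (acut C).card + 2 * (mergeS C).card) hC'
    rw [hsumbase] at he1
    linarith
  -- Step 1: each B i is contained in some part
  have hBin : ∀ i : Fin k, ∃ C ∈ 𝒞.parts, Bset k H n a i ⊆ C := by
    intro i
    by_contra hcon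
    push_neg at hcon
    set w : BinV k H n a := Sum.inl (i, ⟨0, by omega⟩) with hw
    have hwB : w ∈ Bset k H n a i := by rw [mem_Bset]; rfl
    have hC₀ : 𝒞.part w ∈ 𝒞.parts := 𝒞.part_mem.2 (mem_univ w)
    have hm1 : 1 ≤ (Bset k H n a i ∩ 𝒞.part w).card :=
      Finset.card_pos.2 ⟨w, Finset.mem_inter.2 ⟨hwB, 𝒞.mem_part (mem_univ w)⟩⟩
    have hm2 : 1 ≤ (Bset k H n a i \ 𝒞.part w).card := by
      obtain ⟨v, hv, hv'⟩ := Finset.not_subset.1 (hcon (𝒞.part w) hC₀)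
      exact Finset.card_pos.2 ⟨v, Finset.mem_sdiff.2 ⟨hv, hv'⟩⟩
    have hmm : (Bset k H n a i ∩ 𝒞.part w).card + (Bset k H n a i \ 𝒞.part w).card = H := by
      rw [Finset.card_inter_add_card_sdiff, card_Bset]
    obtain ⟨p, hp⟩ : ∃ p, (Bset k H n a i ∩ 𝒞.part w).card = p + 1 :=
      ⟨(Bset k H n a i ∩ 𝒞.part w).card - 1, by omega⟩
    obtain ⟨q, hq⟩ : ∃ q, (Bset k H n a i \ 𝒞.part w).card = q + 1 :=
      ⟨(Bset k H n a i \ 𝒞.part w).card - 1, by omega⟩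
    have hprod := prod_ge p q
    have hpq : p + q + 2 = H := by omega
    have hk1 := hkey1 (𝒞.part w) hC₀ i
    rw [hp, hq] at hk1
    have hcm : D * A = A * D := mul_comm D A
    linarith
  -- the part containing B i
  have hz0 : (0 : ℕ) < H := by omega
  have hw0B : ∀ i : Fin k, (Sum.inl (i, ⟨0, hz0⟩) : BinV k H n a) ∈ Bset k H n a i := by
    intro i; rw [mem_Bset]; rfl
  set Ci : Fin k → Finset (BinV k H n a) :=
    fun i => 𝒞.part (Sum.inl (i, ⟨0, hz0⟩)) with hCi
  have hCimem : ∀ i, Ci i ∈ 𝒞.parts := fun i => 𝒞.part_mem.2 (mem_univ _)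
  have hsubCi : ∀ i, Bset k H n a i ⊆ Ci i := by
    intro i
    obtain ⟨C, hC, hsub⟩ := hBin i
    have hwc : (Sum.inl (i, ⟨0, hz0⟩) : BinV k H n a) ∈ C := hsub (hw0B i)
    have hpe : Ci i = C := 𝒞.part_eq_of_mem hC hwc
    rw [hpe]
    exact hsub
  -- Step 2: the parts for different i are different
  have hinj : Function.Injective Ci := by
    intro i j hij
    by_contra hne
    have hdisj : Disjoint (Bset k H n a i) (Bset k H n a j) := by
      rw [Finset.disjoint_left]
      intro v hv hv'
      rw [mem_Bset] at hv hv'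
      rw [hv] at hv'
      exact hne (Option.some.inj hv')
    have hsub2 : Bset k H n a i ∪ Bset k H n a j ⊆ Ball k H n a ∩ Ci i := by
      apply Finset.union_subset
      · intro v hv
        exact Finset.mem_inter.2 ⟨Bset_subset_Ball i hv, hsubCi i hv⟩
      · intro v hv
        refine Finset.mem_inter.2 ⟨Bset_subset_Ball j hv, ?_⟩
        rw [hij]
        exact hsubCi j hv
    have hβ2H : 2 * H ≤ (Ball k H n a ∩ Ci i).card := by
      calc 2 * H = (Bset k H n a i ∪ Bset k H n a j).card := by
            rw [Finset.card_union_of_disjoint hdisj, card_Bset, card_Bset]; ring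
        _ ≤ _ := Finset.card_le_card hsub2
    have hf := hβfacts (Ci i)
    have hpen := perpart_pen (Aall k H n a ∩ Ci i).card (Ball k H n a ∩ Ci i).card
      (D + H) H A (hαle _) (by omega) h2A hβ2H
    have e1 : D + H - H = D := by omega
    have e2 : D + H - (Ball k H n a ∩ Ci i).card = (Ball k H n a \ Ci i).card := by omega
    rw [e1, e2] at hpen
    have hterm : 2 * ((Aall k H n a ∩ Ci i).card * D) + H * H
        ≤ 2 * (acut (Ci i)).card + 2 * (mergeS (Ci i)).card := by
      refine hpen.trans ?_
      rw [acut_card]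
      exact Nat.add_le_add_left (merge_card_ge _) _
    have hk2 := hkey2 (Ci i) (hCimem i) (H * H) hterm
    have hHH : 2 * (A * A) + 1 ≤ H * H := by
      have h2H : 2 * (A * A) + 1 ≤ 2 * H := by linarith
      have hHH2 : 2 * H ≤ H * H := Nat.mul_le_mul_right H (by omega)
      linarith
    have hcm : D * A = A * D := mul_comm D A
    linarith
  -- Step 3: every part is one of the `Ci`
  have hBmem : ∀ C ∈ 𝒞.parts, ∃ i, C = Ci i := by
    intro C hC
    by_contra hnone
    push_neg at hnone
    have hBempty : Ball k H n a ∩ C = ∅ := by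
      rw [Finset.eq_empty_iff_forall_notMem]
      rintro v hv
      rw [Finset.mem_inter] at hv
      obtain ⟨hvB, hvC⟩ := hv
      rw [mem_Ball] at hvB
      obtain ⟨p, rfl⟩ := Sum.isLeft_iff.1 hvB
      obtain ⟨i', x'⟩ := p
      have h1 : (Sum.inl (i', x') : BinV k H n a) ∈ Ci i' :=
        hsubCi i' (by rw [mem_Bset]; rfl)
      exact hnone i' (𝒞.eq_of_mem_parts hC (hCimem i') hvC h1)
    obtain ⟨v, hv⟩ := 𝒞.nonempty_of_mem_parts hC
    have hvA : v ∈ Aall k H n a ∩ C := by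
      rw [Finset.mem_inter]
      refine ⟨?_, hv⟩
      rw [mem_Aall]
      cases v with
      | inl p =>
        exfalso
        exact (Finset.eq_empty_iff_forall_notMem.1 hBempty) (Sum.inl p)
          (Finset.mem_inter.2 ⟨mem_Ball.2 rfl, hv⟩)
      | inr q => rfl
    have hα1 : 1 ≤ (Aall k H n a ∩ C).card := Finset.card_pos.2 ⟨v, hvA⟩
    have hsd : Ball k H n a \ C = Ball k H n a := by
      rw [Finset.sdiff_eq_self_iff_disjoint]
      exact Finset.disjoint_iff_inter_eq_empty.2 hBempty
    have hacut : (acut C).card = (Aall k H n a ∩ C).card * (D + H) := by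
      rw [acut_card, hsd, card_Ball, ← hDH]
    have hterm : 2 * ((Aall k H n a ∩ C).card * D) + 2 * H
        ≤ 2 * (acut C).card + 2 * (mergeS C).card := by
      have h1 : 2 * ((Aall k H n a ∩ C).card * D) + 2 * H
          ≤ 2 * ((Aall k H n a ∩ C).card * (D + H)) := by
        have h2 : 1 * H ≤ (Aall k H n a ∩ C).card * H := Nat.mul_le_mul_right H hα1
        rw [show 2 * ((Aall k H n a ∩ C).card * (D + H))
          = 2 * ((Aall k H n a ∩ C).card * D) + 2 * ((Aall k H n a ∩ C).card * H) from by ring]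
        omega
      refine h1.trans ?_
      rw [← hacut]
      exact Nat.le_add_right _ _
    have hk2 := hkey2 C hC (2 * H) hterm
    have hcm : D * A = A * D := mul_comm D A
    linarith
  -- conclusion
  have hparts : 𝒞.parts = Finset.univ.image Ci := by
    apply Finset.Subset.antisymm
    · intro C hC
      obtain ⟨i, rfl⟩ := hBmem C hC
      exact Finset.mem_image.2 ⟨i, mem_univ i, rfl⟩
    · intro C hC
      obtain ⟨i, _, rfl⟩ := Finset.mem_image.1 hC
      exact hCimem i
  constructor
  · rw [hparts, Finset.card_image_of_injective _ hinj, card_univ, Fintype.card_fin]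
  · intro C hC
    obtain ⟨i, rfl⟩ := hBmem C hC
    refine ⟨i, hsubCi i, ?_⟩
    intro j hj
    apply hinj
    exact 𝒞.eq_of_mem_parts (hCimem j) (hCimem i) (hsubCi j (hw0B j)) (hj (hw0B j))

end ClusterEditing
end

section
/- Let G be a finite simple graph, let 𝒞 be an optimal clustering of G, and let X ⊆ V(G) be a module of G. Let C ∈ 𝒞 be a part with C ∩ X ≠ ∅ and C \ X ≠ ∅. Let A be the set of vertices of C \ X that are adjacent to every vertex of X, and let B = (C \ X) \ A (by the module property, every vertex of B is adjacent to no vertex of X). Then |A| ≥ |B|. -/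
open Finset

universe u

namespace ClusterEditing




variable {V : Type u}

/-- Partition of `S ∪ T` into two disjoint nonempty parts. -/
noncomputable def twoPart [DecidableEq V] (S T : Finset V)
    (hd : Disjoint S T) (hS : S.Nonempty) (hT : T.Nonempty) : Finpartition (S ∪ T) where
  parts := {S, T}
  supIndep := by
    have hne : S ≠ T := by
      rintro rfl
      exact hS.ne_empty (disjoint_self.1 hd)
    exact (Finset.supIndep_pair hne).2 (by simpa using hd)
  sup_parts := by simp [Finset.sup_insert, Finset.sup_singleton]
  bot_notMem := by
    simp only [Finset.bot_eq_empty, Finset.mem_insert, Finset.mem_singleton]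
    push_neg
    exact ⟨hS.ne_empty.symm, hT.ne_empty.symm⟩

theorem statement8 {V : Type u} [Fintype V] [DecidableEq V] (G : SimpleGraph V)
    (𝒞 : Finpartition (univ : Finset V)) (hopt : IsOptimal G 𝒞)
    (X : Finset V)
    (hmod : ∀ v ∉ X, (∀ x ∈ X, G.Adj v x) ∨ (∀ x ∈ X, ¬ G.Adj v x))
    (C : Finset V) (hC : C ∈ 𝒞.parts)
    (h1 : (C ∩ X).Nonempty) (h2 : (C \ X).Nonempty)
    (A B : Finset V)
    (hA : ∀ v, v ∈ A ↔ v ∈ C \ X ∧ ∀ x ∈ X, G.Adj v x)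
    (hB : B = (C \ X) \ A) :
    B.card ≤ A.card := by
  classical
  set S : Finset V := C ∩ X with hSdef
  set T : Finset V := C \ X with hTdef
  have hSX : S ⊆ X := inter_subset_right
  have hSC : S ⊆ C := inter_subset_left
  have hTC : T ⊆ C := sdiff_subset
  have hTX : ∀ v ∈ T, v ∉ X := fun v hv => (mem_sdiff.1 hv).2
  have hd : Disjoint S T := by
    rw [Finset.disjoint_left]
    intro v hvS hvT
    exact hTX v hvT (hSX hvS)
  have hST : S ∪ T = C := by
    ext x
    simp only [hSdef, hTdef, mem_union, mem_inter, mem_sdiff]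
    tauto
  have hAT : A ⊆ T := fun v hv => (hA v).1 hv |>.1
  have hBT : B ⊆ T := hB ▸ sdiff_subset
  -- the modified clustering, splitting C into S and T
  set P' : Finpartition (univ : Finset V) :=
    𝒞.bind (fun D hD => if h : D = C then
      (twoPart S T hd h1 h2).copy (hST.trans h.symm)
      else Finpartition.indiscrete (𝒞.ne_bot hD)) with hP'
  have hmem : ∀ t : Finset V, t ∈ P'.parts ↔ (t ∈ 𝒞.parts ∧ t ≠ C) ∨ t = S ∨ t = T := by
    intro t
    rw [hP', Finpartition.mem_bind]
    constructor
    · rintro ⟨D, hD, ht⟩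
      by_cases h : D = C
      · subst h
        rw [dif_pos rfl] at ht
        have ht' : t ∈ ({S, T} : Finset (Finset V)) := ht
        rw [mem_insert, mem_singleton] at ht'
        tauto
      · simp only [dif_neg h, Finpartition.indiscrete_parts, mem_singleton] at ht
        exact Or.inl ⟨ht ▸ hD, ht ▸ h⟩
    · rintro (⟨ht, hne⟩ | rfl | rfl)
      · exact ⟨t, ht, by simp [dif_neg hne, Finpartition.indiscrete_parts]⟩
      · refine ⟨C, hC, ?_⟩
        rw [dif_pos rfl]
        exact mem_insert_self _ _
      · refine ⟨C, hC, ?_⟩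
        rw [dif_pos rfl]
        exact mem_insert_of_mem (mem_singleton_self _)
  -- "between" pairs
  set Btw : Sym2 V → Prop := fun e => ∃ u ∈ S, ∃ v ∈ T, e = s(u, v) with hBtw
  have inside_iff : ∀ e : Sym2 V,
      (∃ D ∈ 𝒞.parts, ∀ v ∈ e, v ∈ D) ↔ (∃ D ∈ P'.parts, ∀ v ∈ e, v ∈ D) ∨ Btw e := by
    intro e
    constructor
    · rintro ⟨D, hD, hvD⟩
      by_cases h : D = C
      · subst h
        induction e using Sym2.ind with
        | _ u v =>
          have hu : u ∈ D := hvD u (Sym2.mem_mk_left u v)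
          have hv : v ∈ D := hvD v (Sym2.mem_mk_right u v)
          by_cases hux : u ∈ X <;> by_cases hvx : v ∈ X
          · refine Or.inl ⟨S, (hmem S).2 (Or.inr (Or.inl rfl)), ?_⟩
            intro w hw
            rcases Sym2.mem_iff.1 hw with rfl | rfl
            · exact mem_inter.2 ⟨hu, hux⟩
            · exact mem_inter.2 ⟨hv, hvx⟩
          · exact Or.inr ⟨u, mem_inter.2 ⟨hu, hux⟩, v, mem_sdiff.2 ⟨hv, hvx⟩, rfl⟩
          · exact Or.inr ⟨v, mem_inter.2 ⟨hv, hvx⟩, u, mem_sdiff.2 ⟨hu, hux⟩, Sym2.eq_swap⟩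
          · refine Or.inl ⟨T, (hmem T).2 (Or.inr (Or.inr rfl)), ?_⟩
            intro w hw
            rcases Sym2.mem_iff.1 hw with rfl | rfl
            · exact mem_sdiff.2 ⟨hu, hux⟩
            · exact mem_sdiff.2 ⟨hv, hvx⟩
      · exact Or.inl ⟨D, (hmem D).2 (Or.inl ⟨hD, h⟩), hvD⟩
    · rintro (⟨D, hD, hvD⟩ | ⟨u, hu, v, hv, rfl⟩)
      · rcases (hmem D).1 hD with ⟨hD', _⟩ | rfl | rfl
        · exact ⟨D, hD', hvD⟩
        · exact ⟨C, hC, fun w hw => hSC (hvD w hw)⟩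
        · exact ⟨C, hC, fun w hw => hTC (hvD w hw)⟩
      · refine ⟨C, hC, ?_⟩
        intro w hw
        rcases Sym2.mem_iff.1 hw with rfl | rfl
        · exact hSC hu
        · exact hTC hv
  have excl : ∀ e : Sym2 V, (∃ D ∈ P'.parts, ∀ v ∈ e, v ∈ D) → Btw e → False := by
    rintro e ⟨D, hD, hvD⟩ ⟨u, hu, v, hv, rfl⟩
    have huD : u ∈ D := hvD u (Sym2.mem_mk_left u v)
    have hvD' : v ∈ D := hvD v (Sym2.mem_mk_right u v)
    rcases (hmem D).1 hD with ⟨hD', hne⟩ | rfl | rfl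
    · exact hne (𝒞.eq_of_mem_parts hD' hC huD (hSC hu))
    · exact (Finset.disjoint_left.1 hd) hvD' hv
    · exact (Finset.disjoint_left.1 hd) hu huD
  -- the four relevant sets
  set EB : Set (Sym2 V) := {e | e ∈ G.edgeSet ∧ Btw e} with hEBdef
  set NB : Set (Sym2 V) := {e | e ∈ Gᶜ.edgeSet ∧ Btw e} with hNBdef
  have hcut :
      {e : Sym2 V | e ∈ G.edgeSet ∧ (∀ v ∈ e, v ∈ (univ : Finset V)) ∧
          ¬ ∃ D ∈ P'.parts, ∀ v ∈ e, v ∈ D} =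
      {e : Sym2 V | e ∈ G.edgeSet ∧ (∀ v ∈ e, v ∈ (univ : Finset V)) ∧
          ¬ ∃ D ∈ 𝒞.parts, ∀ v ∈ e, v ∈ D} ∪ EB := by
    ext e
    simp only [Set.mem_setOf_eq, Set.mem_union, hEBdef]
    have h1' := inside_iff e
    have h2' := excl e
    constructor
    · rintro ⟨he, hu, hni⟩
      by_cases hb : Btw e
      · exact Or.inr ⟨he, hb⟩
      · exact Or.inl ⟨he, hu, fun hi => (h1'.1 hi).elim hni hb⟩
    · rintro (⟨he, hu, hni⟩ | ⟨he, hb⟩)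
      · exact ⟨he, hu, fun hi => hni (h1'.2 (Or.inl hi))⟩
      · exact ⟨he, fun v _ => mem_univ v, fun hi => h2' hi hb⟩
  have hsame :
      {e : Sym2 V | e ∈ Gᶜ.edgeSet ∧ ∃ D ∈ 𝒞.parts, ∀ v ∈ e, v ∈ D} =
      {e : Sym2 V | e ∈ Gᶜ.edgeSet ∧ ∃ D ∈ P'.parts, ∀ v ∈ e, v ∈ D} ∪ NB := by
    ext e
    simp only [Set.mem_setOf_eq, Set.mem_union, hNBdef]
    have h1' := inside_iff e
    constructor
    · rintro ⟨he, hi⟩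
      rcases h1'.1 hi with hi' | hb
      · exact Or.inl ⟨he, hi'⟩
      · exact Or.inr ⟨he, hb⟩
    · rintro (⟨he, hi⟩ | ⟨he, hb⟩)
      · exact ⟨he, h1'.2 (Or.inl hi)⟩
      · exact ⟨he, h1'.2 (Or.inr hb)⟩
  have hdisj1 : Disjoint
      {e : Sym2 V | e ∈ G.edgeSet ∧ (∀ v ∈ e, v ∈ (univ : Finset V)) ∧
          ¬ ∃ D ∈ 𝒞.parts, ∀ v ∈ e, v ∈ D} EB := by
    rw [Set.disjoint_left]
    rintro e ⟨_, _, hni⟩ ⟨_, hb⟩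
    exact hni ((inside_iff e).2 (Or.inr hb))
  have hdisj2 : Disjoint
      {e : Sym2 V | e ∈ Gᶜ.edgeSet ∧ ∃ D ∈ P'.parts, ∀ v ∈ e, v ∈ D} NB := by
    rw [Set.disjoint_left]
    rintro e ⟨_, hi⟩ ⟨_, hb⟩
    exact excl e hi hb
  -- counting EB and NB
  have hEBcount : EB.ncard = S.card * A.card := by
    have himg : EB = Sym2.mk.uncurry '' ((S ×ˢ A : Finset (V × V)) : Set (V × V)) := by
      ext e
      simp only [hEBdef, Set.mem_setOf_eq, Set.mem_image, Finset.coe_mem, Finset.mem_coe,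
        Finset.mem_product]
      constructor
      · rintro ⟨he, u, hu, v, hv, rfl⟩
        have hadj : G.Adj u v := (SimpleGraph.mem_edgeSet _).1 he
        have hvx : v ∉ X := hTX v hv
        have hvA : v ∈ A := by
          rw [hA]
          refine ⟨hv, ?_⟩
          rcases hmod v hvx with hall | hnone
          · exact hall
          · exact absurd (hadj.symm) (hnone u (hSX hu))
        exact ⟨(u, v), ⟨hu, hvA⟩, rfl⟩
      · rintro ⟨⟨u, v⟩, ⟨hu, hv⟩, rfl⟩
        have hadj : G.Adj u v := (((hA v).1 hv).2 u (hSX hu)).symm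
        exact ⟨(SimpleGraph.mem_edgeSet _).2 hadj, u, hu, v, hAT hv, rfl⟩
    rw [himg, Set.ncard_image_of_injOn, Set.ncard_coe_finset, Finset.card_product]
    rintro ⟨u, v⟩ huv ⟨u', v'⟩ huv' heq
    simp only [Finset.mem_coe, Finset.mem_product] at huv huv'
    rcases Sym2.eq_iff.1 heq with ⟨rfl, rfl⟩ | ⟨rfl, rfl⟩
    · rfl
    · exact absurd huv'.1 (Finset.disjoint_right.1 hd (hAT huv.2))
  have hNBcount : NB.ncard = S.card * B.card := by
    have himg : NB = Sym2.mk.uncurry '' ((S ×ˢ B : Finset (V × V)) : Set (V × V)) := by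
      ext e
      simp only [hNBdef, Set.mem_setOf_eq, Set.mem_image, Finset.mem_coe,
        Finset.mem_product]
      constructor
      · rintro ⟨he, u, hu, v, hv, rfl⟩
        have hne : Gᶜ.Adj u v := (SimpleGraph.mem_edgeSet _).1 he
        rw [SimpleGraph.compl_adj] at hne
        have hvB : v ∈ B := by
          rw [hB]
          refine mem_sdiff.2 ⟨hv, fun hvA => ?_⟩
          exact hne.2 ((((hA v).1 hvA).2 u (hSX hu)).symm)
        exact ⟨(u, v), ⟨hu, hvB⟩, rfl⟩
      · rintro ⟨⟨u, v⟩, ⟨hu, hv⟩, rfl⟩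
        have hvT : v ∈ T := hBT hv
        have hvx : v ∉ X := hTX v hvT
        have hne : u ≠ v := fun h => hvx (h ▸ hSX hu)
        have hnadj : ¬ G.Adj u v := by
          intro hadj
          rcases hmod v hvx with hall | hnone
          · have : v ∈ A := (hA v).2 ⟨hvT, hall⟩
            rw [hB] at hv
            exact (mem_sdiff.1 hv).2 this
          · exact hnone u (hSX hu) hadj.symm
        exact ⟨(SimpleGraph.mem_edgeSet _).2 ((SimpleGraph.compl_adj _ _ _).2 ⟨hne, hnadj⟩),
          u, hu, v, hvT, rfl⟩
    rw [himg, Set.ncard_image_of_injOn, Set.ncard_coe_finset, Finset.card_product]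
    rintro ⟨u, v⟩ huv ⟨u', v'⟩ huv' heq
    simp only [Finset.mem_coe, Finset.mem_product] at huv huv'
    rcases Sym2.eq_iff.1 heq with ⟨rfl, rfl⟩ | ⟨rfl, rfl⟩
    · rfl
    · exact absurd huv'.1 (Finset.disjoint_right.1 hd (hBT huv.2))
  -- cost comparison
  have hle := hopt P'
  unfold cost costOn at hle
  rw [hcut, hsame, Set.ncard_union_eq hdisj1, Set.ncard_union_eq hdisj2] at hle
  have hkey : NB.ncard ≤ EB.ncard := by omega
  rw [hEBcount, hNBcount] at hkey
  exact Nat.le_of_mul_le_mul_left hkey (Finset.card_pos.2 h1)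

end ClusterEditing
end

section
/- Let G be a finite simple graph and 𝒞 a clustering of G containing two distinct parts C₁ = Y ⊎ A ⊎ B and C₂ = Y' ⊎ A' ⊎ B' (each written as a disjoint union of three sets). Suppose that: every vertex of A ∪ A' is adjacent to every vertex of Y ∪ Y'; no vertex of B ∪ B' is adjacent to any vertex of Y ∪ Y'; |A| ≥ |B| and |A'| ≥ |B'|; and the number of edges of G between A ∪ B and A' ∪ B' is at least the number of non-adjacent pairs between A ∪ B and A' ∪ B'. Then at least one of the two clusterings (𝒞 \ {C₁, C₂}) ∪ {C₁ ∪ A' ∪ B', Y'} and (𝒞 \ {C₁, C₂}) ∪ {Y, C₂ ∪ A ∪ B} has cost at most cost_G(𝒞). -/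
open Finset

universe u

namespace ClusterEditing




variable {V : Type u}

-- HELPERS (to be inserted into proof.lean before statement9)
section Helpers
set_option linter.unusedSectionVars false
variable {V : Type u} [Fintype V] [DecidableEq V]

/-- sym2 pairs with one endpoint in S and one in T -/
def pany (S T : Finset V) : Set (Sym2 V) := {e | ∃ u ∈ S, ∃ v ∈ T, e = s(u, v)}

lemma mem_pany {S T : Finset V} {u v : V} (hu : u ∈ S) (hv : v ∈ T) : s(u, v) ∈ pany S T :=
  ⟨u, hu, v, hv, rfl⟩

lemma pany_comm (S T : Finset V) : pany S T = pany T S := by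
  ext e
  constructor <;> rintro ⟨u, hu, v, hv, rfl⟩ <;> exact ⟨v, hv, u, hu, Sym2.eq_swap.symm⟩

lemma pany_union_left (S₁ S₂ T : Finset V) :
    pany (S₁ ∪ S₂) T = pany S₁ T ∪ pany S₂ T := by
  ext e
  constructor
  · rintro ⟨u, hu, v, hv, rfl⟩
    rcases mem_union.1 hu with h | h
    · exact Or.inl (mem_pany h hv)
    · exact Or.inr (mem_pany h hv)
  · rintro (⟨u, hu, v, hv, rfl⟩ | ⟨u, hu, v, hv, rfl⟩)
    · exact mem_pany (mem_union_left _ hu) hv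
    · exact mem_pany (mem_union_right _ hu) hv

lemma ncard_inter_pany_union (X : Set (Sym2 V)) {S₁ S₂ T : Finset V}
    (h12 : Disjoint S₁ S₂) (h2T : Disjoint S₂ T) :
    (X ∩ pany (S₁ ∪ S₂) T).ncard = (X ∩ pany S₁ T).ncard + (X ∩ pany S₂ T).ncard := by
  rw [pany_union_left, Set.inter_union_distrib_left]
  apply Set.ncard_union_eq _ (Set.toFinite _) (Set.toFinite _)
  rw [Set.disjoint_left]
  rintro e ⟨-, u, hu, v, hv, rfl⟩ ⟨-, u', hu', v', hv', he⟩
  rw [Sym2.eq_iff] at he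
  rcases he with ⟨rfl, rfl⟩ | ⟨rfl, rfl⟩
  · exact h12.forall_ne_finset hu hu' rfl
  · exact h2T.forall_ne_finset hu' hv rfl

lemma ncard_inter_pany (X : Set (Sym2 V)) {S T : Finset V} (hST : Disjoint S T) :
    (X ∩ pany S T).ncard = {p : V × V | p.1 ∈ S ∧ p.2 ∈ T ∧ Sym2.mk p.1 p.2 ∈ X}.ncard := by
  have himg : X ∩ pany S T = (fun p : V × V => Sym2.mk p.1 p.2) '' {p : V × V | p.1 ∈ S ∧ p.2 ∈ T ∧ Sym2.mk p.1 p.2 ∈ X} := by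
    ext e
    constructor
    · rintro ⟨hX, u, hu, v, hv, rfl⟩
      exact ⟨(u, v), ⟨hu, hv, hX⟩, rfl⟩
    · rintro ⟨⟨u, v⟩, ⟨hu, hv, hX⟩, rfl⟩
      exact ⟨hX, u, hu, v, hv, rfl⟩
  rw [himg]
  apply Set.ncard_image_of_injOn
  rintro ⟨u, v⟩ ⟨hu, hv, -⟩ ⟨u', v'⟩ ⟨hu', hv', -⟩ he
  have he' : s(u, v) = s(u', v') := he
  rcases Sym2.eq_iff.1 he' with ⟨rfl, rfl⟩ | ⟨rfl, rfl⟩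
  · rfl
  · exact absurd rfl (hST.forall_ne_finset hu hv')

variable (G : SimpleGraph V)

lemma cntA_eq {S T : Finset V} (hST : Disjoint S T) :
    (G.edgeSet ∩ pany S T).ncard = eBetween G S T := by
  rw [ncard_inter_pany _ hST]
  have h : {p : V × V | p.1 ∈ S ∧ p.2 ∈ T ∧ Sym2.mk p.1 p.2 ∈ G.edgeSet}
      = {p : V × V | p.1 ∈ S ∧ p.2 ∈ T ∧ G.Adj p.1 p.2} := by
    ext ⟨u, v⟩
    simp [SimpleGraph.mem_edgeSet]
  rw [h]
  rfl

lemma cnt_add {S T : Finset V} (hST : Disjoint S T) :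
    (G.edgeSet ∩ pany S T).ncard + (Gᶜ.edgeSet ∩ pany S T).ncard = S.card * T.card := by
  rw [ncard_inter_pany _ hST, ncard_inter_pany _ hST]
  rw [← Set.ncard_union_eq ?_ (Set.toFinite _) (Set.toFinite _)]
  · have h : {p : V × V | p.1 ∈ S ∧ p.2 ∈ T ∧ Sym2.mk p.1 p.2 ∈ G.edgeSet} ∪
        {p : V × V | p.1 ∈ S ∧ p.2 ∈ T ∧ Sym2.mk p.1 p.2 ∈ Gᶜ.edgeSet} = ↑(S ×ˢ T) := by
      ext ⟨u, v⟩
      have hne : u ∈ S → v ∈ T → u ≠ v := fun hu hv => hST.forall_ne_finset hu hv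
      by_cases h : G.Adj u v <;>
        simp_all [SimpleGraph.mem_edgeSet, SimpleGraph.compl_adj, Finset.mem_product]
    rw [h, Set.ncard_coe_finset, Finset.card_product]
  · rw [Set.disjoint_left]
    rintro ⟨u, v⟩ ⟨-, -, h1⟩ ⟨-, -, h2⟩
    rw [SimpleGraph.mem_edgeSet] at h1
    exact ((SimpleGraph.compl_adj G u v).mp ((SimpleGraph.mem_edgeSet Gᶜ).mp h2)).2 h1

lemma cntN_eq {S T : Finset V} (hST : Disjoint S T) :
    (Gᶜ.edgeSet ∩ pany S T).ncard = nonEBetween G S T := by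
  have h1 := cnt_add G hST
  rw [cntA_eq G hST] at h1
  unfold nonEBetween
  omega

lemma cntN_full {S T : Finset V} (hST : Disjoint S T)
    (h : ∀ u ∈ S, ∀ v ∈ T, G.Adj u v) :
    (Gᶜ.edgeSet ∩ pany S T).ncard = 0 ∧ (G.edgeSet ∩ pany S T).ncard = S.card * T.card := by
  have he : Gᶜ.edgeSet ∩ pany S T = ∅ := by
    ext e
    simp only [Set.mem_inter_iff, Set.mem_empty_iff_false, iff_false, not_and]
    rintro hN ⟨u, hu, v, hv, rfl⟩
    exact ((SimpleGraph.compl_adj G u v).mp ((SimpleGraph.mem_edgeSet Gᶜ).mp hN)).2 (h u hu v hv)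
  have hadd := cnt_add G hST (S := S) (T := T)
  rw [he] at hadd ⊢
  simp only [Set.ncard_empty, add_zero] at hadd
  exact ⟨Set.ncard_empty _, hadd⟩

lemma cntA_none {S T : Finset V} (hST : Disjoint S T)
    (h : ∀ u ∈ S, ∀ v ∈ T, ¬ G.Adj u v) :
    (G.edgeSet ∩ pany S T).ncard = 0 ∧ (Gᶜ.edgeSet ∩ pany S T).ncard = S.card * T.card := by
  have he : G.edgeSet ∩ pany S T = ∅ := by
    ext e
    simp only [Set.mem_inter_iff, Set.mem_empty_iff_false, iff_false, not_and]
    rintro hN ⟨u, hu, v, hv, rfl⟩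
    exact h u hu v hv ((SimpleGraph.mem_edgeSet G).mp hN)
  have hadd := cnt_add G hST (S := S) (T := T)
  rw [he] at hadd ⊢
  simp only [Set.ncard_empty, zero_add] at hadd
  exact ⟨Set.ncard_empty _, hadd⟩

lemma eBetween_comm (S T : Finset V) : eBetween G S T = eBetween G T S := by
  unfold eBetween
  rw [show {p : V × V | p.1 ∈ S ∧ p.2 ∈ T ∧ G.Adj p.1 p.2}
      = Prod.swap '' {p : V × V | p.1 ∈ T ∧ p.2 ∈ S ∧ G.Adj p.1 p.2} from ?_,
    Set.ncard_image_of_injective _ Prod.swap_injective]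
  ext ⟨u, v⟩
  constructor
  · rintro ⟨h1, h2, h3⟩
    exact ⟨(v, u), ⟨h2, h1, h3.symm⟩, rfl⟩
  · rintro ⟨⟨a, b⟩, ⟨h1, h2, h3⟩, he⟩
    cases he
    exact ⟨h2, h1, h3.symm⟩

lemma nonEBetween_comm (S T : Finset V) : nonEBetween G S T = nonEBetween G T S := by
  unfold nonEBetween
  rw [eBetween_comm, Nat.mul_comm]

/-- "together" predicate: both endpoints of `e` lie in a common part of `P` -/
def tog (P : Finpartition (univ : Finset V)) (e : Sym2 V) : Prop := ∃ C ∈ P.parts, ∀ v ∈ e, v ∈ C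

lemma cost_eq (P : Finpartition (univ : Finset V)) :
    cost G P = (G.edgeSet ∩ {e | tog P e}ᶜ).ncard + (Gᶜ.edgeSet ∩ {e | tog P e}).ncard := by
  unfold cost costOn
  have h1 : {e : Sym2 V | e ∈ G.edgeSet ∧ (∀ v ∈ e, v ∈ (univ : Finset V)) ∧
      ¬ ∃ C ∈ P.parts, ∀ v ∈ e, v ∈ C} = G.edgeSet ∩ {e | tog P e}ᶜ := by
    ext e
    simp [tog]
  have h2 : {e : Sym2 V | e ∈ Gᶜ.edgeSet ∧ ∃ C ∈ P.parts, ∀ v ∈ e, v ∈ C}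
      = Gᶜ.edgeSet ∩ {e | tog P e} := by
    ext e
    simp [tog]
  rw [h1, h2]

lemma ncard_split_compl (X TA TB : Set (Sym2 V)) :
    (X ∩ TAᶜ).ncard = (X ∩ (TAᶜ ∩ TBᶜ)).ncard + (X ∩ (TB \ TA)).ncard := by
  rw [← Set.ncard_union_eq ?_ (Set.toFinite _) (Set.toFinite _)]
  · congr 1
    ext e
    by_cases h : e ∈ TB <;>
      simp only [Set.mem_inter_iff, Set.mem_union, Set.mem_compl_iff, Set.mem_diff] <;> tauto
  · rw [Set.disjoint_left]
    rintro e ⟨-, -, h1⟩ ⟨-, h2, -⟩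
    exact h1 h2

lemma ncard_split_inter (X TA TB : Set (Sym2 V)) :
    (X ∩ TA).ncard = (X ∩ (TA ∩ TB)).ncard + (X ∩ (TA \ TB)).ncard := by
  rw [← Set.ncard_union_eq ?_ (Set.toFinite _) (Set.toFinite _)]
  · congr 1
    ext e
    by_cases h : e ∈ TB <;>
      simp only [Set.mem_inter_iff, Set.mem_union, Set.mem_diff] <;> tauto
  · rw [Set.disjoint_left]
    rintro e ⟨-, -, h1⟩ ⟨-, -, h2⟩
    exact h2 h1

end Helpers


set_option maxHeartbeats 1000000 in
lemma aux {V : Type u} [Fintype V] [DecidableEq V] (G : SimpleGraph V)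
    (𝒞 : Finpartition (univ : Finset V))
    (Y A B Y' A' B' C₁ C₂ : Finset V)
    (hC₁ : C₁ = Y ∪ A ∪ B) (hC₂ : C₂ = Y' ∪ A' ∪ B')
    (hd₁ : Disjoint Y A) (hd₂ : Disjoint Y B)
    (hd₁' : Disjoint Y' A') (hd₂' : Disjoint Y' B') (hd₃' : Disjoint A' B')
    (hC₁p : C₁ ∈ 𝒞.parts) (hC₂p : C₂ ∈ 𝒞.parts) (hne : C₁ ≠ C₂)
    (hadj : ∀ u ∈ A ∪ A', ∀ v ∈ Y ∪ Y', G.Adj u v)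
    (hnadj : ∀ u ∈ B ∪ B', ∀ v ∈ Y ∪ Y', ¬ G.Adj u v)
    (hAB' : B'.card ≤ A'.card)
    (hedges : nonEBetween G (A ∪ B) (A' ∪ B') ≤ eBetween G (A ∪ B) (A' ∪ B'))
    (hYY : Y'.card ≤ Y.card) :
    ∃ 𝒟 : Finpartition (univ : Finset V),
      𝒟.parts = ((𝒞.parts \ {C₁, C₂}) ∪ {C₁ ∪ A' ∪ B', Y'}).erase ∅ ∧
      cost G 𝒟 ≤ cost G 𝒞 := by
  classical
  set W : Finset V := A' ∪ B' with hW
  set D1 : Finset V := C₁ ∪ A' ∪ B' with hD1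
  have hD1W : D1 = C₁ ∪ W := by rw [hD1, hW, union_assoc]
  have hC₂eq : C₂ = Y' ∪ W := by rw [hC₂, hW, union_assoc]
  have hC₁C₂ : Disjoint C₁ C₂ := 𝒞.disjoint hC₁p hC₂p hne
  have hY'W : Disjoint Y' W := by rw [hW]; exact disjoint_union_right.2 ⟨hd₁', hd₂'⟩
  have hWC₂ : W ⊆ C₂ := by rw [hC₂eq]; exact subset_union_right
  have hY'C₂ : Y' ⊆ C₂ := by rw [hC₂eq]; exact subset_union_left
  have hC₁W : Disjoint C₁ W := hC₁C₂.mono_right hWC₂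
  have hC₁Y' : Disjoint C₁ Y' := hC₁C₂.mono_right hY'C₂
  have hC₁non : C₁.Nonempty := by
    refine Finset.nonempty_iff_ne_empty.2 (fun h => 𝒞.bot_notMem ?_)
    rw [Finset.bot_eq_empty, ← h]
    exact hC₁p
  have hC₁D1 : C₁ ⊆ D1 := by rw [hD1W]; exact subset_union_left
  have hWD1 : W ⊆ D1 := by rw [hD1W]; exact subset_union_right
  -- the new parts
  set NP : Finset (Finset V) := (𝒞.parts \ {C₁, C₂}) ∪ {D1, Y'} with hNP
  have hD1NP : D1 ∈ NP := by
    rw [hNP]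
    exact mem_union_right _ (mem_insert_self _ _)
  have hY'NP : Y' ∈ NP := by
    rw [hNP]
    exact mem_union_right _ (mem_insert_of_mem (mem_singleton_self _))
  have holdNP : ∀ C ∈ 𝒞.parts, C ≠ C₁ → C ≠ C₂ → C ∈ NP := by
    intro C hal h1 h2
    rw [hNP]
    refine mem_union_left _ (mem_sdiff.2 ⟨hal, ?_⟩)
    simp [h1, h2]
  have hNPcases : ∀ C ∈ NP, (C ∈ 𝒞.parts ∧ C ≠ C₁ ∧ C ≠ C₂) ∨ C = D1 ∨ C = Y' := by
    intro C hC
    rw [hNP] at hC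
    rcases mem_union.1 hC with h | h
    · rw [mem_sdiff] at h
      refine Or.inl ⟨h.1, ?_, ?_⟩ <;> · intro he; apply h.2; simp [he]
    · rcases mem_insert.1 h with h' | h'
      · exact Or.inr (Or.inl h')
      · exact Or.inr (Or.inr (mem_singleton.1 h'))
  -- disjointness of the new parts
  have holddisj : ∀ C ∈ 𝒞.parts, C ≠ C₁ → C ≠ C₂ → Disjoint C D1 ∧ Disjoint C Y' := by
    intro C hal h1 h2
    have dc1 : Disjoint C C₁ := 𝒞.disjoint hal hC₁p h1
    have dc2 : Disjoint C C₂ := 𝒞.disjoint hal hC₂p h2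
    exact ⟨by rw [hD1W]; exact disjoint_union_right.2 ⟨dc1, dc2.mono_right hWC₂⟩,
      dc2.mono_right hY'C₂⟩
  have hD1Y' : Disjoint D1 Y' := by
    rw [hD1W]
    exact disjoint_union_left.2 ⟨hC₁Y', hY'W.symm⟩
  have hsi : NP.SupIndep id := by
    rw [Finset.supIndep_iff_pairwiseDisjoint]
    intro a ha b hb hab
    rcases hNPcases a ha with ⟨hap, ha1, ha2⟩ | rfl | rfl <;>
      rcases hNPcases b hb with ⟨hbp, hb1, hb2⟩ | rfl | rfl
    · exact 𝒞.disjoint hap hbp hab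
    · exact (holddisj a hap ha1 ha2).1
    · exact (holddisj a hap ha1 ha2).2
    · exact ((holddisj b hbp hb1 hb2).1).symm
    · exact absurd rfl hab
    · exact hD1Y'
    · exact ((holddisj b hbp hb1 hb2).2).symm
    · exact hD1Y'.symm
    · exact absurd rfl hab
  have hsup : NP.sup id = univ := by
    apply le_antisymm
    · exact Finset.sup_le fun i _ => le_top
    · intro v _
      rw [Finset.mem_sup]
      obtain ⟨C, hC, hvC⟩ := 𝒞.exists_mem (mem_univ v)
      by_cases h1 : C = C₁
      · exact ⟨D1, hD1NP, hC₁D1 (h1 ▸ hvC)⟩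
      by_cases h2 : C = C₂
      · subst h2
        rw [hC₂eq] at hvC
        rcases mem_union.1 hvC with h | h
        · exact ⟨Y', hY'NP, h⟩
        · exact ⟨D1, hD1NP, hWD1 h⟩
      · exact ⟨C, holdNP C hC h1 h2, hvC⟩
  set 𝒟 := Finpartition.ofErase NP hsi hsup with h𝒟
  have hDparts : 𝒟.parts = NP.erase ∅ := by
    rw [h𝒟]
    rfl
  refine ⟨𝒟, by rw [hDparts, hNP, hD1], ?_⟩
  -- membership facts for 𝒟
  have hmemD1 : D1 ∈ 𝒟.parts := by
    rw [hDparts]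
    exact mem_erase.2 ⟨Finset.nonempty_iff_ne_empty.1 (hC₁non.mono hC₁D1), hD1NP⟩
  have hmemY' : ∀ v ∈ Y', Y' ∈ 𝒟.parts := by
    intro v hv
    rw [hDparts]
    exact mem_erase.2 ⟨Finset.nonempty_iff_ne_empty.1 ⟨v, hv⟩, hY'NP⟩
  have hmemOld : ∀ C ∈ 𝒞.parts, C ≠ C₁ → C ≠ C₂ → C ∈ 𝒟.parts := by
    intro C hal h1 h2
    rw [hDparts]
    refine mem_erase.2 ⟨?_, holdNP C hal h1 h2⟩
    intro he
    apply 𝒞.bot_notMem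
    rw [Finset.bot_eq_empty, ← he]
    exact hal
  have hDcases : ∀ C ∈ 𝒟.parts, (C ∈ 𝒞.parts ∧ C ≠ C₁ ∧ C ≠ C₂) ∨ C = D1 ∨ C = Y' := by
    intro C hC
    rw [hDparts] at hC
    exact hNPcases C (mem_of_mem_erase hC)
  -- the key set computations
  have K1 : {e : Sym2 V | tog 𝒞 e} \ {e : Sym2 V | tog 𝒟 e} = pany W Y' := by
    ext e
    induction e using Sym2.ind with
    | _ u v =>
      constructor
      · rintro ⟨⟨C, hCp, hC⟩, hnot⟩
        have hu : u ∈ C := hC u (Sym2.mem_mk_left u v)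
        have hv : v ∈ C := hC v (Sym2.mem_mk_right u v)
        by_cases h2 : C = C₂
        · subst h2
          rw [hC₂eq] at hu hv
          rcases mem_union.1 hu with hu' | hu' <;> rcases mem_union.1 hv with hv' | hv'
          · exfalso
            apply hnot
            refine ⟨Y', hmemY' u hu', fun w hw => ?_⟩
            rcases Sym2.mem_iff.1 hw with rfl | rfl
            exacts [hu', hv']
          · exact ⟨v, hv', u, hu', Sym2.eq_swap.symm⟩
          · exact ⟨u, hu', v, hv', rfl⟩
          · exfalso
            apply hnot
            refine ⟨D1, hmemD1, fun w hw => ?_⟩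
            rcases Sym2.mem_iff.1 hw with rfl | rfl
            exacts [hWD1 hu', hWD1 hv']
        · exfalso
          apply hnot
          by_cases h1 : C = C₁
          · exact ⟨D1, hmemD1, fun w hw => hC₁D1 (h1 ▸ hC w hw)⟩
          · exact ⟨C, hmemOld C hCp h1 h2, hC⟩
      · rintro ⟨a, haW, b, hbY, he⟩
        constructor
        · refine ⟨C₂, hC₂p, fun w hw => ?_⟩
          rw [he] at hw
          rcases Sym2.mem_iff.1 hw with rfl | rfl
          exacts [hWC₂ haW, hY'C₂ hbY]
        · rintro ⟨D, hDp, hD⟩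
          have haD : a ∈ D := hD a (by rw [he]; exact Sym2.mem_mk_left a b)
          have hbD : b ∈ D := hD b (by rw [he]; exact Sym2.mem_mk_right a b)
          rcases hDcases D hDp with ⟨hDold, h1, h2⟩ | rfl | rfl
          · exact Finset.disjoint_left.1 (𝒞.disjoint hDold hC₂p h2) haD (hWC₂ haW)
          · rcases mem_union.1 (hD1W ▸ hbD) with h | h
            · exact Finset.disjoint_left.1 hC₁Y' h hbY
            · exact Finset.disjoint_left.1 hY'W hbY h
          · exact Finset.disjoint_left.1 hY'W haD haW
  have K2 : {e : Sym2 V | tog 𝒟 e} \ {e : Sym2 V | tog 𝒞 e} = pany C₁ W := by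
    ext e
    induction e using Sym2.ind with
    | _ u v =>
      constructor
      · rintro ⟨⟨D, hDp, hD⟩, hnot⟩
        have hu : u ∈ D := hD u (Sym2.mem_mk_left u v)
        have hv : v ∈ D := hD v (Sym2.mem_mk_right u v)
        rcases hDcases D hDp with ⟨hDold, h1, h2⟩ | rfl | rfl
        · exact absurd ⟨D, hDold, hD⟩ hnot
        · rw [hD1W] at hu hv
          rcases mem_union.1 hu with hu' | hu' <;> rcases mem_union.1 hv with hv' | hv'
          · exfalso
            apply hnot
            refine ⟨C₁, hC₁p, fun w hw => ?_⟩
            rcases Sym2.mem_iff.1 hw with rfl | rfl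
            exacts [hu', hv']
          · exact ⟨u, hu', v, hv', rfl⟩
          · exact ⟨v, hv', u, hu', Sym2.eq_swap.symm⟩
          · exfalso
            apply hnot
            refine ⟨C₂, hC₂p, fun w hw => ?_⟩
            rcases Sym2.mem_iff.1 hw with rfl | rfl
            exacts [hWC₂ hu', hWC₂ hv']
        · exfalso
          apply hnot
          exact ⟨C₂, hC₂p, fun w hw => hY'C₂ (hD w hw)⟩
      · rintro ⟨a, haC, b, hbW, he⟩
        constructor
        · refine ⟨D1, hmemD1, fun w hw => ?_⟩
          rw [he] at hw
          rcases Sym2.mem_iff.1 hw with rfl | rfl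
          exacts [hC₁D1 haC, hWD1 hbW]
        · rintro ⟨C, hCp, hC⟩
          have haD : a ∈ C := hC a (by rw [he]; exact Sym2.mem_mk_left a b)
          have hbD : b ∈ C := hC b (by rw [he]; exact Sym2.mem_mk_right a b)
          have hCC₁ : C = C₁ := 𝒞.eq_of_mem_parts hCp hC₁p haD haC
          exact Finset.disjoint_left.1 hC₁W (hCC₁ ▸ hbD) hbW
  -- subsets and disjointness needed for counting
  have hYC₁ : Y ⊆ C₁ := by rw [hC₁]; intro x hx; exact mem_union_left _ (mem_union_left _ hx)
  have hABC₁ : A ∪ B ⊆ C₁ := by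
    rw [hC₁, union_assoc]
    exact subset_union_right
  have hdYAB : Disjoint Y (A ∪ B) := disjoint_union_right.2 ⟨hd₁, hd₂⟩
  have hdABW : Disjoint (A ∪ B) W := hC₁C₂.mono hABC₁ hWC₂
  have hA'C₂ : A' ⊆ C₂ := fun x hx => hWC₂ (mem_union_left _ hx)
  have hB'C₂ : B' ⊆ C₂ := fun x hx => hWC₂ (mem_union_right _ hx)
  have hdA'Y : Disjoint A' Y := (hC₁C₂.mono hYC₁ hA'C₂).symm
  have hdB'Y : Disjoint B' Y := (hC₁C₂.mono hYC₁ hB'C₂).symm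
  have hdA'Y' : Disjoint A' Y' := hd₁'.symm
  have hdB'Y' : Disjoint B' Y' := hd₂'.symm
  -- adjacency facts
  have hadjA'Y : ∀ u ∈ A', ∀ v ∈ Y, G.Adj u v :=
    fun u hu v hv => hadj u (mem_union_right _ hu) v (mem_union_left _ hv)
  have hadjA'Y' : ∀ u ∈ A', ∀ v ∈ Y', G.Adj u v :=
    fun u hu v hv => hadj u (mem_union_right _ hu) v (mem_union_right _ hv)
  have hnadjB'Y : ∀ u ∈ B', ∀ v ∈ Y, ¬ G.Adj u v :=
    fun u hu v hv => hnadj u (mem_union_right _ hu) v (mem_union_left _ hv)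
  have hnadjB'Y' : ∀ u ∈ B', ∀ v ∈ Y', ¬ G.Adj u v :=
    fun u hu v hv => hnadj u (mem_union_right _ hu) v (mem_union_right _ hv)
  -- counting the four corner quantities
  have cWY'E : (G.edgeSet ∩ pany W Y').ncard = A'.card * Y'.card := by
    rw [hW, ncard_inter_pany_union _ hd₃' hdB'Y', (cntN_full G hdA'Y' hadjA'Y').2,
      (cntA_none G hdB'Y' hnadjB'Y').1, add_zero]
  have cWY'N : (Gᶜ.edgeSet ∩ pany W Y').ncard = B'.card * Y'.card := by
    rw [hW, ncard_inter_pany_union _ hd₃' hdB'Y', (cntN_full G hdA'Y' hadjA'Y').1,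
      (cntA_none G hdB'Y' hnadjB'Y').2, zero_add]
  have hC₁split : C₁ = Y ∪ (A ∪ B) := by rw [hC₁, union_assoc]
  have cYWE : (G.edgeSet ∩ pany Y W).ncard = A'.card * Y.card := by
    rw [pany_comm, hW, ncard_inter_pany_union _ hd₃' hdB'Y, (cntN_full G hdA'Y hadjA'Y).2,
      (cntA_none G hdB'Y hnadjB'Y).1, add_zero]
  have cYWN : (Gᶜ.edgeSet ∩ pany Y W).ncard = B'.card * Y.card := by
    rw [pany_comm, hW, ncard_inter_pany_union _ hd₃' hdB'Y, (cntN_full G hdA'Y hadjA'Y).1,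
      (cntA_none G hdB'Y hnadjB'Y).2, zero_add]
  have cC₁WE : (G.edgeSet ∩ pany C₁ W).ncard = A'.card * Y.card + eBetween G (A ∪ B) W := by
    rw [hC₁split, ncard_inter_pany_union _ hdYAB hdABW, cYWE, cntA_eq G hdABW]
  have cC₁WN : (Gᶜ.edgeSet ∩ pany C₁ W).ncard
      = B'.card * Y.card + nonEBetween G (A ∪ B) W := by
    rw [hC₁split, ncard_inter_pany_union _ hdYAB hdABW, cYWN, cntN_eq G hdABW]
  -- assemble the cost comparison
  rw [cost_eq, cost_eq]
  have e1 := ncard_split_compl G.edgeSet {e : Sym2 V | tog 𝒟 e} {e : Sym2 V | tog 𝒞 e}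
  have e2 := ncard_split_compl G.edgeSet {e : Sym2 V | tog 𝒞 e} {e : Sym2 V | tog 𝒟 e}
  have e3 := ncard_split_inter Gᶜ.edgeSet {e : Sym2 V | tog 𝒟 e} {e : Sym2 V | tog 𝒞 e}
  have e4 := ncard_split_inter Gᶜ.edgeSet {e : Sym2 V | tog 𝒞 e} {e : Sym2 V | tog 𝒟 e}
  rw [Set.inter_comm {e : Sym2 V | tog 𝒞 e}ᶜ] at e2
  rw [Set.inter_comm {e : Sym2 V | tog 𝒞 e}] at e4
  rw [K1] at e1 e4
  rw [K2] at e2 e3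
  rw [e1, e2, e3, e4, cWY'E, cWY'N, cC₁WE, cC₁WN]
  have key : A'.card * Y'.card + (B'.card * Y.card + nonEBetween G (A ∪ B) W)
      ≤ (A'.card * Y.card + eBetween G (A ∪ B) W) + B'.card * Y'.card := by
    have hre : B'.card * Y.card + A'.card * Y'.card
        ≤ B'.card * Y'.card + A'.card * Y.card :=
      mul_add_mul_le_mul_add_mul hAB' hYY
    have he : nonEBetween G (A ∪ B) W ≤ eBetween G (A ∪ B) W := by rw [hW]; exact hedges
    omega
  omega


theorem statement9 {V : Type u} [Fintype V] [DecidableEq V] (G : SimpleGraph V)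
    (𝒞 : Finpartition (univ : Finset V))
    (Y A B Y' A' B' C₁ C₂ : Finset V)
    (hC₁ : C₁ = Y ∪ A ∪ B) (hC₂ : C₂ = Y' ∪ A' ∪ B')
    (hd₁ : Disjoint Y A) (hd₂ : Disjoint Y B) (hd₃ : Disjoint A B)
    (hd₁' : Disjoint Y' A') (hd₂' : Disjoint Y' B') (hd₃' : Disjoint A' B')
    (hC₁p : C₁ ∈ 𝒞.parts) (hC₂p : C₂ ∈ 𝒞.parts) (hne : C₁ ≠ C₂)
    (hadj : ∀ u ∈ A ∪ A', ∀ v ∈ Y ∪ Y', G.Adj u v)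
    (hnadj : ∀ u ∈ B ∪ B', ∀ v ∈ Y ∪ Y', ¬ G.Adj u v)
    (hAB : B.card ≤ A.card) (hAB' : B'.card ≤ A'.card)
    (hedges : nonEBetween G (A ∪ B) (A' ∪ B') ≤ eBetween G (A ∪ B) (A' ∪ B')) :
    ∃ 𝒟 : Finpartition (univ : Finset V),
      (𝒟.parts = ((𝒞.parts \ {C₁, C₂}) ∪ {C₁ ∪ A' ∪ B', Y'}).erase ∅ ∨
       𝒟.parts = ((𝒞.parts \ {C₁, C₂}) ∪ {Y, C₂ ∪ A ∪ B}).erase ∅) ∧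
      cost G 𝒟 ≤ cost G 𝒞 := by
  by_cases hYY : Y'.card ≤ Y.card
  · obtain ⟨𝒟, h1, h2⟩ := aux G 𝒞 Y A B Y' A' B' C₁ C₂ hC₁ hC₂ hd₁ hd₂ hd₁' hd₂' hd₃'
      hC₁p hC₂p hne hadj hnadj hAB' hedges hYY
    exact ⟨𝒟, Or.inl h1, h2⟩
  · have hYY' : Y.card ≤ Y'.card := le_of_not_ge hYY
    have hadj' : ∀ u ∈ A' ∪ A, ∀ v ∈ Y' ∪ Y, G.Adj u v := fun u hu v hv =>
      hadj u (mem_union.2 (mem_union.1 hu).symm) v (mem_union.2 (mem_union.1 hv).symm)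
    have hnadj' : ∀ u ∈ B' ∪ B, ∀ v ∈ Y' ∪ Y, ¬ G.Adj u v := fun u hu v hv =>
      hnadj u (mem_union.2 (mem_union.1 hu).symm) v (mem_union.2 (mem_union.1 hv).symm)
    have hedges' : nonEBetween G (A' ∪ B') (A ∪ B) ≤ eBetween G (A' ∪ B') (A ∪ B) := by
      rw [nonEBetween_comm, eBetween_comm]
      exact hedges
    obtain ⟨𝒟, h1, h2⟩ := aux G 𝒞 Y' A' B' Y A B C₂ C₁ hC₂ hC₁ hd₁' hd₂' hd₁ hd₂ hd₃
      hC₂p hC₁p hne.symm hadj' hnadj' hAB hedges' hYY'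
    refine ⟨𝒟, Or.inr ?_, h2⟩
    rw [h1, Finset.pair_comm C₂ C₁, Finset.pair_comm (C₂ ∪ A ∪ B) Y]

end ClusterEditing
end

section
/- Let G₁ and G₂ be finite simple graphs on disjoint vertex sets V₁ and V₂, and let G be their join (the disjoint union together with all edges between V₁ and V₂). Then for every clustering 𝒞 of G, cost_G(𝒞) = cost_{G₁}(𝒞|_{V₁}) + cost_{G₂}(𝒞|_{V₂}) + |V₁|·|V₂| − Σ_{C ∈ 𝒞} |C ∩ V₁|·|C ∩ V₂|. -/
open Finset

universe u

namespace ClusterEditing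




variable {V : Type u}

variable {α β : Type*}

/-- Disjoint union of two graphs. -/
def sumGraph (G₁ : SimpleGraph α) (G₂ : SimpleGraph β) : SimpleGraph (α ⊕ β) where
  Adj u v := match u, v with
    | Sum.inl a, Sum.inl a' => G₁.Adj a a'
    | Sum.inr b, Sum.inr b' => G₂.Adj b b'
    | _, _ => False
  symm := by
    constructor
    rintro (a | a) (b | b) h
    · exact G₁.adj_symm h
    · exact h.elim
    · exact h.elim
    · exact G₂.adj_symm h
  loopless := by
    constructor
    rintro (a | a) h
    · exact G₁.loopless.irrefl a h
    · exact G₂.loopless.irrefl a h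

/-- Join of two graphs: disjoint union plus all edges in between. -/
def joinGraph (G₁ : SimpleGraph α) (G₂ : SimpleGraph β) : SimpleGraph (α ⊕ β) where
  Adj u v := match u, v with
    | Sum.inl a, Sum.inl a' => G₁.Adj a a'
    | Sum.inr b, Sum.inr b' => G₂.Adj b b'
    | Sum.inl _, Sum.inr _ => True
    | Sum.inr _, Sum.inl _ => True
  symm := by
    constructor
    rintro (a | a) (b | b) h
    · exact G₁.adj_symm h
    · trivial
    · trivial
    · exact G₂.adj_symm h
  loopless := by
    constructor
    rintro (a | a) h
    · exact G₁.loopless.irrefl a h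
    · exact G₂.loopless.irrefl a h

/-- NLC-style composition: disjoint union plus the edges between labeled vertices
controlled by `S`. -/
def nlcGraph {κ : ℕ} (G₁ : SimpleGraph α) (G₂ : SimpleGraph β)
    (lab₁ : α → Fin κ) (lab₂ : β → Fin κ) (S : Finset (Fin κ × Fin κ)) :
    SimpleGraph (α ⊕ β) where
  Adj u v := match u, v with
    | Sum.inl a, Sum.inl a' => G₁.Adj a a'
    | Sum.inr b, Sum.inr b' => G₂.Adj b b'
    | Sum.inl a, Sum.inr b => (lab₁ a, lab₂ b) ∈ S
    | Sum.inr b, Sum.inl a => (lab₁ a, lab₂ b) ∈ S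
  symm := by
    constructor
    rintro (a | a) (b | b) h
    · exact G₁.adj_symm h
    · exact h
    · exact h
    · exact G₂.adj_symm h
  loopless := by
    constructor
    rintro (a | a) h
    · exact G₁.loopless.irrefl a h
    · exact G₂.loopless.irrefl a h

section Aux
open Function
lemma ncard_eq_card_filter {W : Type*} [Fintype W] (p : Sym2 W → Prop) [DecidablePred p] :
    {e : Sym2 W | p e}.ncard = (univ.filter p).card := by
  classical
  rw [← Set.ncard_coe_finset]
  congr 1
  ext e; simp

lemma mem_image_sym2_map_iff {γ δ : Type*} [DecidableEq δ] {f : γ → δ}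
    (hf : Injective f) (s : Finset (Sym2 γ)) (x y : γ) :
    s(f x, f y) ∈ s.image (Sym2.map f) ↔ s(x, y) ∈ s := by
  simp only [mem_image]
  constructor
  · rintro ⟨e, he, h⟩
    have : e = s(x, y) := Sym2.map.injective hf (by rw [h, Sym2.map_pair_eq])
    rwa [this] at he
  · exact fun h => ⟨_, h, Sym2.map_pair_eq f x y⟩

lemma shape_of_mem_image_map {γ δ : Type*} [DecidableEq δ] {f : γ → δ}
    {s : Finset (Sym2 γ)} {e : Sym2 δ} (h : e ∈ s.image (Sym2.map f)) :
    ∃ a b, e = s(f a, f b) := by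
  obtain ⟨e', _, he⟩ := mem_image.mp h
  induction e' using Sym2.ind with
  | _ a b => exact ⟨a, b, by rw [← he, Sym2.map_pair_eq]⟩

section Cross
variable {γ δ : Type*} [DecidableEq γ] [DecidableEq δ]

omit [DecidableEq γ] [DecidableEq δ] in
lemma cross_injective : Injective (fun p : γ × δ => s(Sum.inl p.1, (Sum.inr p.2 : γ ⊕ δ))) := by
  rintro ⟨a, b⟩ ⟨a', b'⟩ h
  simp only [Sym2.eq_iff] at h
  rcases h with ⟨h1, h2⟩ | ⟨h1, h2⟩
  · simp_all
  · simp_all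

lemma mem_image_cross_iff (s : Finset (γ × δ)) (a : γ) (b : δ) :
    s(Sum.inl a, (Sum.inr b : γ ⊕ δ)) ∈
      s.image (fun p : γ × δ => s(Sum.inl p.1, (Sum.inr p.2 : γ ⊕ δ))) ↔ (a, b) ∈ s := by
  simp only [mem_image]
  constructor
  · rintro ⟨⟨x, y⟩, h, he⟩
    simp only [Sym2.eq_iff] at he
    rcases he with ⟨h1, h2⟩ | ⟨h1, h2⟩
    · obtain rfl := Sum.inl.inj h1
      obtain rfl := Sum.inr.inj h2
      exact h
    · exact absurd h1 (by simp)
  · intro h; exact ⟨(a, b), h, rfl⟩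

lemma shape_of_mem_image_cross {s : Finset (γ × δ)} {e : Sym2 (γ ⊕ δ)}
    (h : e ∈ s.image (fun p : γ × δ => s(Sum.inl p.1, (Sum.inr p.2 : γ ⊕ δ)))) :
    ∃ a b, e = s(Sum.inl a, Sum.inr b) := by
  obtain ⟨⟨a, b⟩, _, he⟩ := mem_image.mp h
  exact ⟨a, b, he.symm⟩

end Cross
end Aux

theorem statement17 {α β : Type*} [Fintype α] [Fintype β] [DecidableEq α] [DecidableEq β]
    (G₁ : SimpleGraph α) (G₂ : SimpleGraph β)
    (𝒞 : Finpartition (univ : Finset (α ⊕ β)))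
    (𝒟₁ : Finpartition (univ : Finset α)) (𝒟₂ : Finpartition (univ : Finset β))
    (h₁ : 𝒟₁.parts =
      (𝒞.parts.image fun C => (univ : Finset α).filter fun x => Sum.inl x ∈ C).erase ∅)
    (h₂ : 𝒟₂.parts =
      (𝒞.parts.image fun C => (univ : Finset β).filter fun x => Sum.inr x ∈ C).erase ∅) :
    cost (joinGraph G₁ G₂) 𝒞 +
        ∑ C ∈ 𝒞.parts,
          (C ∩ (univ : Finset α).image Sum.inl).card *
            (C ∩ (univ : Finset β).image Sum.inr).card =
      cost G₁ 𝒟₁ + cost G₂ 𝒟₂ + Fintype.card α * Fintype.card β := by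
  classical
  -- transfer of "same part" between 𝒞 and 𝒟₁ / 𝒟₂
  have key₁ : ∀ a a' : α,
      ((∃ C ∈ 𝒞.parts, Sum.inl a ∈ C ∧ Sum.inl a' ∈ C) ↔
        ∃ D ∈ 𝒟₁.parts, a ∈ D ∧ a' ∈ D) := by
    intro a a'
    rw [h₁]
    constructor
    · rintro ⟨C, hC, ha, ha'⟩
      refine ⟨(univ : Finset α).filter fun x => Sum.inl x ∈ C, ?_, by simp [ha], by simp [ha']⟩
      refine mem_erase.mpr ⟨?_, mem_image_of_mem _ hC⟩
      exact ne_empty_of_mem (show a ∈ _ by simp [ha])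
    · rintro ⟨D, hD, ha, ha'⟩
      obtain ⟨-, hD⟩ := mem_erase.mp hD
      obtain ⟨C, hC, rfl⟩ := mem_image.mp hD
      simp only [mem_filter] at ha ha'
      exact ⟨C, hC, ha.2, ha'.2⟩
  have key₂ : ∀ b b' : β,
      ((∃ C ∈ 𝒞.parts, Sum.inr b ∈ C ∧ Sum.inr b' ∈ C) ↔
        ∃ D ∈ 𝒟₂.parts, b ∈ D ∧ b' ∈ D) := by
    intro b b'
    rw [h₂]
    constructor
    · rintro ⟨C, hC, hb, hb'⟩
      refine ⟨(univ : Finset β).filter fun x => Sum.inr x ∈ C, ?_, by simp [hb], by simp [hb']⟩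
      refine mem_erase.mpr ⟨?_, mem_image_of_mem _ hC⟩
      exact ne_empty_of_mem (show b ∈ _ by simp [hb])
    · rintro ⟨D, hD, hb, hb'⟩
      obtain ⟨-, hD⟩ := mem_erase.mp hD
      obtain ⟨C, hC, rfl⟩ := mem_image.mp hD
      simp only [mem_filter] at hb hb'
      exact ⟨C, hC, hb.2, hb'.2⟩
  -- the pieces
  set A₁ : Finset (Sym2 α) := univ.filter
    (fun e => e ∈ G₁.edgeSet ∧ ¬ ∃ C ∈ 𝒞.parts, ∀ v ∈ e, Sum.inl v ∈ C) with hA₁def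
  set B₁ : Finset (Sym2 α) := univ.filter
    (fun e => e ∈ G₁ᶜ.edgeSet ∧ ∃ C ∈ 𝒞.parts, ∀ v ∈ e, Sum.inl v ∈ C) with hB₁def
  set A₂ : Finset (Sym2 β) := univ.filter
    (fun e => e ∈ G₂.edgeSet ∧ ¬ ∃ C ∈ 𝒞.parts, ∀ v ∈ e, Sum.inr v ∈ C) with hA₂def
  set B₂ : Finset (Sym2 β) := univ.filter
    (fun e => e ∈ G₂ᶜ.edgeSet ∧ ∃ C ∈ 𝒞.parts, ∀ v ∈ e, Sum.inr v ∈ C) with hB₂def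
  set X : Finset (α × β) := univ.filter
    (fun p => ¬ ∃ C ∈ 𝒞.parts, Sum.inl p.1 ∈ C ∧ Sum.inr p.2 ∈ C) with hXdef
  set Y : Finset (α × β) := univ.filter
    (fun p => ∃ C ∈ 𝒞.parts, Sum.inl p.1 ∈ C ∧ Sum.inr p.2 ∈ C) with hYdef
  -- cost of G₁ w.r.t. 𝒟₁
  have hcost₁ : cost G₁ 𝒟₁ = A₁.card + B₁.card := by
    unfold cost costOn
    rw [ncard_eq_card_filter, ncard_eq_card_filter]
    congr 1
    · apply congrArg
      apply filter_congr
      intro e _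
      induction e using Sym2.ind with
      | _ a a' =>
        simp only [Sym2.mem_iff, forall_eq_or_imp, forall_eq, mem_univ, and_true, true_and]
        rw [key₁]
    · apply congrArg
      apply filter_congr
      intro e _
      induction e using Sym2.ind with
      | _ a a' =>
        simp only [Sym2.mem_iff, forall_eq_or_imp, forall_eq]
        rw [key₁]
  have hcost₂ : cost G₂ 𝒟₂ = A₂.card + B₂.card := by
    unfold cost costOn
    rw [ncard_eq_card_filter, ncard_eq_card_filter]
    congr 1
    · apply congrArg
      apply filter_congr
      intro e _
      induction e using Sym2.ind with
      | _ b b' =>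
        simp only [Sym2.mem_iff, forall_eq_or_imp, forall_eq, mem_univ, and_true, true_and]
        rw [key₂]
    · apply congrArg
      apply filter_congr
      intro e _
      induction e using Sym2.ind with
      | _ b b' =>
        simp only [Sym2.mem_iff, forall_eq_or_imp, forall_eq]
        rw [key₂]
  -- cost of the join
  have hcostJ : cost (joinGraph G₁ G₂) 𝒞 =
      (A₁.card + A₂.card + X.card) + (B₁.card + B₂.card) := by
    unfold cost costOn
    rw [ncard_eq_card_filter, ncard_eq_card_filter]
    have hFA : (univ.filter fun e : Sym2 (α ⊕ β) =>
        e ∈ (joinGraph G₁ G₂).edgeSet ∧ (∀ v ∈ e, v ∈ univ) ∧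
          ¬ ∃ C ∈ 𝒞.parts, ∀ v ∈ e, v ∈ C) =
        A₁.image (Sym2.map Sum.inl) ∪ A₂.image (Sym2.map Sum.inr) ∪
          X.image (fun p => s(Sum.inl p.1, Sum.inr p.2)) := by
      ext e
      induction e using Sym2.ind with
      | _ x y =>
        rcases x with a | b <;> rcases y with a' | b'
        · simp only [mem_filter, mem_univ, true_and, and_true, SimpleGraph.mem_edgeSet,
            Sym2.mem_iff, forall_eq_or_imp, forall_eq, mem_union,
            mem_image_sym2_map_iff Sum.inl_injective]
          have h2 : s(Sum.inl a, (Sum.inl a' : α ⊕ β)) ∉ A₂.image (Sym2.map Sum.inr) := by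
            intro h
            obtain ⟨x, y, he⟩ := shape_of_mem_image_map h
            simp [Sym2.eq_iff] at he
          have h3 : s(Sum.inl a, (Sum.inl a' : α ⊕ β)) ∉
              X.image (fun p => s(Sum.inl p.1, Sum.inr p.2)) := by
            intro h
            obtain ⟨x, y, he⟩ := shape_of_mem_image_cross h
            simp [Sym2.eq_iff] at he
          simp only [h2, h3, or_false]
          rw [hA₁def]
          simp only [mem_filter, mem_univ, true_and, SimpleGraph.mem_edgeSet,
            Sym2.mem_iff, forall_eq_or_imp, forall_eq]
          show G₁.Adj a a' ∧ _ ↔ _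
          tauto
        · -- inl a, inr b'
          simp only [mem_filter, mem_univ, true_and, and_true, SimpleGraph.mem_edgeSet,
            Sym2.mem_iff, forall_eq_or_imp, forall_eq, mem_union, mem_image_cross_iff]
          have h1 : s(Sum.inl a, (Sum.inr b' : α ⊕ β)) ∉ A₁.image (Sym2.map Sum.inl) := by
            intro h
            obtain ⟨x, y, he⟩ := shape_of_mem_image_map h
            simp [Sym2.eq_iff] at he
          have h2 : s(Sum.inl a, (Sum.inr b' : α ⊕ β)) ∉ A₂.image (Sym2.map Sum.inr) := by
            intro h
            obtain ⟨x, y, he⟩ := shape_of_mem_image_map h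
            simp [Sym2.eq_iff] at he
          simp only [h1, h2, false_or]
          rw [hXdef]
          simp only [mem_filter, mem_univ, true_and]
          show (joinGraph G₁ G₂).Adj (Sum.inl a) (Sum.inr b') ∧ _ ↔ _
          have : (joinGraph G₁ G₂).Adj (Sum.inl a) (Sum.inr b') := by trivial
          exact and_iff_right this
        · -- inr b, inl a'
          rw [Sym2.eq_swap]
          simp only [mem_filter, mem_univ, true_and, and_true, SimpleGraph.mem_edgeSet,
            Sym2.mem_iff, forall_eq_or_imp, forall_eq, mem_union, mem_image_cross_iff]
          have h1 : s(Sum.inl a', (Sum.inr b : α ⊕ β)) ∉ A₁.image (Sym2.map Sum.inl) := by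
            intro h
            obtain ⟨x, y, he⟩ := shape_of_mem_image_map h
            simp [Sym2.eq_iff] at he
          have h2 : s(Sum.inl a', (Sum.inr b : α ⊕ β)) ∉ A₂.image (Sym2.map Sum.inr) := by
            intro h
            obtain ⟨x, y, he⟩ := shape_of_mem_image_map h
            simp [Sym2.eq_iff] at he
          simp only [h1, h2, false_or]
          rw [hXdef]
          simp only [mem_filter, mem_univ, true_and]
          show (joinGraph G₁ G₂).Adj (Sum.inl a') (Sum.inr b) ∧ _ ↔ _
          have : (joinGraph G₁ G₂).Adj (Sum.inl a') (Sum.inr b) := by trivial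
          exact and_iff_right this
        · simp only [mem_filter, mem_univ, true_and, and_true, SimpleGraph.mem_edgeSet,
            Sym2.mem_iff, forall_eq_or_imp, forall_eq, mem_union,
            mem_image_sym2_map_iff Sum.inr_injective]
          have h1 : s(Sum.inr b, (Sum.inr b' : α ⊕ β)) ∉ A₁.image (Sym2.map Sum.inl) := by
            intro h
            obtain ⟨x, y, he⟩ := shape_of_mem_image_map h
            simp [Sym2.eq_iff] at he
          have h3 : s(Sum.inr b, (Sum.inr b' : α ⊕ β)) ∉
              X.image (fun p => s(Sum.inl p.1, Sum.inr p.2)) := by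
            intro h
            obtain ⟨x, y, he⟩ := shape_of_mem_image_cross h
            simp [Sym2.eq_iff] at he
          simp only [h1, h3, false_or, or_false]
          rw [hA₂def]
          simp only [mem_filter, mem_univ, true_and, SimpleGraph.mem_edgeSet,
            Sym2.mem_iff, forall_eq_or_imp, forall_eq]
          show _ ↔ G₂.Adj b b' ∧ _
          tauto
    have hFB : (univ.filter fun e : Sym2 (α ⊕ β) =>
        e ∈ (joinGraph G₁ G₂)ᶜ.edgeSet ∧ ∃ C ∈ 𝒞.parts, ∀ v ∈ e, v ∈ C) =
        B₁.image (Sym2.map Sum.inl) ∪ B₂.image (Sym2.map Sum.inr) := by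
      ext e
      induction e using Sym2.ind with
      | _ x y =>
        rcases x with a | b <;> rcases y with a' | b'
        · simp only [mem_filter, mem_univ, true_and, SimpleGraph.mem_edgeSet,
            SimpleGraph.compl_adj, Sym2.mem_iff, forall_eq_or_imp, forall_eq, mem_union,
            mem_image_sym2_map_iff Sum.inl_injective]
          have h2 : s(Sum.inl a, (Sum.inl a' : α ⊕ β)) ∉ B₂.image (Sym2.map Sum.inr) := by
            intro h
            obtain ⟨x, y, he⟩ := shape_of_mem_image_map h
            simp [Sym2.eq_iff] at he
          simp only [h2, or_false]
          rw [hB₁def]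
          simp only [mem_filter, mem_univ, true_and, SimpleGraph.mem_edgeSet,
            SimpleGraph.compl_adj, Sym2.mem_iff, forall_eq_or_imp, forall_eq]
          show ((Sum.inl a ≠ Sum.inl a') ∧ ¬ (joinGraph G₁ G₂).Adj (Sum.inl a) (Sum.inl a')) ∧ _
            ↔ ((a ≠ a') ∧ ¬ G₁.Adj a a') ∧ _
          have hne : (Sum.inl a : α ⊕ β) ≠ Sum.inl a' ↔ a ≠ a' := by simp
          have hadj : (joinGraph G₁ G₂).Adj (Sum.inl a) (Sum.inl a') ↔ G₁.Adj a a' :=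
            Iff.rfl
          rw [hne, hadj]
        · -- inl a, inr b' : not an edge of the complement
          simp only [mem_filter, mem_univ, true_and, SimpleGraph.mem_edgeSet,
            SimpleGraph.compl_adj, mem_union]
          have hadj : (joinGraph G₁ G₂).Adj (Sum.inl a) (Sum.inr b') := by trivial
          have h1 : s(Sum.inl a, (Sum.inr b' : α ⊕ β)) ∉ B₁.image (Sym2.map Sum.inl) := by
            intro h
            obtain ⟨x, y, he⟩ := shape_of_mem_image_map h
            simp [Sym2.eq_iff] at he
          have h2 : s(Sum.inl a, (Sum.inr b' : α ⊕ β)) ∉ B₂.image (Sym2.map Sum.inr) := by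
            intro h
            obtain ⟨x, y, he⟩ := shape_of_mem_image_map h
            simp [Sym2.eq_iff] at he
          simp only [h1, h2, or_false, iff_false]
          rintro ⟨⟨-, hn⟩, -⟩
          exact hn hadj
        · rw [Sym2.eq_swap]
          simp only [mem_filter, mem_univ, true_and, SimpleGraph.mem_edgeSet,
            SimpleGraph.compl_adj, mem_union]
          have hadj : (joinGraph G₁ G₂).Adj (Sum.inl a') (Sum.inr b) := by trivial
          have h1 : s(Sum.inl a', (Sum.inr b : α ⊕ β)) ∉ B₁.image (Sym2.map Sum.inl) := by
            intro h
            obtain ⟨x, y, he⟩ := shape_of_mem_image_map h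
            simp [Sym2.eq_iff] at he
          have h2 : s(Sum.inl a', (Sum.inr b : α ⊕ β)) ∉ B₂.image (Sym2.map Sum.inr) := by
            intro h
            obtain ⟨x, y, he⟩ := shape_of_mem_image_map h
            simp [Sym2.eq_iff] at he
          simp only [h1, h2, or_false, iff_false]
          rintro ⟨⟨-, hn⟩, -⟩
          exact hn hadj
        · simp only [mem_filter, mem_univ, true_and, SimpleGraph.mem_edgeSet,
            SimpleGraph.compl_adj, Sym2.mem_iff, forall_eq_or_imp, forall_eq, mem_union,
            mem_image_sym2_map_iff Sum.inr_injective]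
          have h1 : s(Sum.inr b, (Sum.inr b' : α ⊕ β)) ∉ B₁.image (Sym2.map Sum.inl) := by
            intro h
            obtain ⟨x, y, he⟩ := shape_of_mem_image_map h
            simp [Sym2.eq_iff] at he
          simp only [h1, false_or]
          rw [hB₂def]
          simp only [mem_filter, mem_univ, true_and, SimpleGraph.mem_edgeSet,
            SimpleGraph.compl_adj, Sym2.mem_iff, forall_eq_or_imp, forall_eq]
          show ((Sum.inr b ≠ Sum.inr b') ∧ ¬ (joinGraph G₁ G₂).Adj (Sum.inr b) (Sum.inr b')) ∧ _
            ↔ ((b ≠ b') ∧ ¬ G₂.Adj b b') ∧ _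
          have hne : (Sum.inr b : α ⊕ β) ≠ Sum.inr b' ↔ b ≠ b' := by simp
          have hadj : (joinGraph G₁ G₂).Adj (Sum.inr b) (Sum.inr b') ↔ G₂.Adj b b' :=
            Iff.rfl
          rw [hne, hadj]
    rw [hFA, hFB]
    -- disjointness
    have d12 : Disjoint (A₁.image (Sym2.map (Sum.inl : α → α ⊕ β)))
        (A₂.image (Sym2.map (Sum.inr : β → α ⊕ β))) := by
      rw [disjoint_left]
      intro e he1 he2
      obtain ⟨x, y, rfl⟩ := shape_of_mem_image_map he1
      obtain ⟨x', y', he⟩ := shape_of_mem_image_map he2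
      simp [Sym2.eq_iff] at he
    have d13 : Disjoint (A₁.image (Sym2.map (Sum.inl : α → α ⊕ β)) ∪
        A₂.image (Sym2.map (Sum.inr : β → α ⊕ β)))
        (X.image (fun p => s(Sum.inl p.1, (Sum.inr p.2 : α ⊕ β)))) := by
      rw [disjoint_left]
      intro e he1 he2
      obtain ⟨x, y, rfl⟩ := shape_of_mem_image_cross he2
      rcases mem_union.mp he1 with h | h
      · obtain ⟨x', y', he⟩ := shape_of_mem_image_map h
        simp [Sym2.eq_iff] at he
      · obtain ⟨x', y', he⟩ := shape_of_mem_image_map h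
        simp [Sym2.eq_iff] at he
    have dB : Disjoint (B₁.image (Sym2.map (Sum.inl : α → α ⊕ β)))
        (B₂.image (Sym2.map (Sum.inr : β → α ⊕ β))) := by
      rw [disjoint_left]
      intro e he1 he2
      obtain ⟨x, y, rfl⟩ := shape_of_mem_image_map he1
      obtain ⟨x', y', he⟩ := shape_of_mem_image_map he2
      simp [Sym2.eq_iff] at he
    rw [card_union_of_disjoint d13, card_union_of_disjoint d12, card_union_of_disjoint dB]
    rw [card_image_of_injective _ (Sym2.map.injective Sum.inl_injective),
      card_image_of_injective _ (Sym2.map.injective Sum.inr_injective),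
      card_image_of_injective _ (Sym2.map.injective Sum.inl_injective),
      card_image_of_injective _ (Sym2.map.injective Sum.inr_injective),
      card_image_of_injective _ cross_injective]
  -- |X| + |Y| = |α| * |β|
  have hXY : Y.card + X.card = Fintype.card α * Fintype.card β := by
    rw [hXdef, hYdef]
    rw [card_filter_add_card_filter_not]
    simp [card_univ]
  -- the sum equals |Y|
  have hsum : ∑ C ∈ 𝒞.parts,
      (C ∩ (univ : Finset α).image Sum.inl).card *
        (C ∩ (univ : Finset β).image Sum.inr).card = Y.card := by
    have hY : Y = 𝒞.parts.biUnion (fun C =>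
        ((univ : Finset α).filter fun a => Sum.inl a ∈ C) ×ˢ
        ((univ : Finset β).filter fun b => Sum.inr b ∈ C)) := by
      ext ⟨a, b⟩
      simp [hYdef, mem_biUnion, mem_product]
    rw [hY, card_biUnion]
    · apply Finset.sum_congr rfl
      intro C _
      rw [card_product]
      congr 1
      · have : C ∩ (univ : Finset α).image Sum.inl =
            ((univ : Finset α).filter fun a => Sum.inl a ∈ C).image Sum.inl := by
          ext x
          rcases x with a | b
          · simp
          · simp
        rw [this, card_image_of_injective _ Sum.inl_injective]
      · have : C ∩ (univ : Finset β).image Sum.inr =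
            ((univ : Finset β).filter fun b => Sum.inr b ∈ C).image Sum.inr := by
          ext x
          rcases x with a | b
          · simp
          · simp
        rw [this, card_image_of_injective _ Sum.inr_injective]
    · intro C hC C' hC' hne
      rw [Function.onFun, disjoint_left]
      rintro ⟨a, b⟩ h h'
      rw [mem_product] at h h'
      simp only [mem_filter] at h h'
      exact hne (𝒞.eq_of_mem_parts hC hC' h.1.2 h'.1.2)
  rw [hcostJ, hcost₁, hcost₂, hsum]
  omega

end ClusterEditing
end

section
/- Let G₁ and G₂ be finite simple graphs on disjoint vertex sets V₁ and V₂, equipped with labelings lab₁ : V₁ → [κ] and lab₂ : V₂ → [κ], and let S ⊆ [κ] × [κ]. Let G be the graph on V₁ ∪ V₂ whose edges are E(G₁) ∪ E(G₂) together with all pairs {u,v} with u ∈ V₁, v ∈ V₂ and (lab₁(u), lab₂(v)) ∈ S. For i ∈ [κ], write V₁ᵢ = lab₁⁻¹(i) and V₂ᵢ = lab₂⁻¹(i). Then for every clustering 𝒞 of G, cost_G(𝒞) = cost_{G₁}(𝒞|_{V₁}) + cost_{G₂}(𝒞|_{V₂}) + Σ_{C ∈ 𝒞} |C ∩ V₁|·|C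 ∩ V₂| + Σ_{(i,i') ∈ S} |V₁ᵢ|·|V₂ᵢ'| − 2·Σ_{(i,i') ∈ S} Σ_{C ∈ 𝒞} |C ∩ V₁ᵢ|·|C ∩ V₂ᵢ'|. -/
open Finset

universe u

namespace ClusterEditing




variable {V : Type u}

variable {α β : Type*}

section Aux

open Classical in
lemma two_mul_cost {V : Type u} [Fintype V] [DecidableEq V] (G : SimpleGraph V)
    (P : Finpartition (univ : Finset V)) :
    2 * cost G P =
      (univ.filter fun p : V × V =>
        (G.Adj p.1 p.2 ∧ ¬ ∃ C ∈ P.parts, p.1 ∈ C ∧ p.2 ∈ C) ∨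
        (p.1 ≠ p.2 ∧ ¬ G.Adj p.1 p.2 ∧ ∃ C ∈ P.parts, p.1 ∈ C ∧ p.2 ∈ C)).card := by
  classical
  set H₁ : SimpleGraph V :=
    { Adj := fun u v => G.Adj u v ∧ ¬ ∃ C ∈ P.parts, u ∈ C ∧ v ∈ C
      symm := by
        constructor
        rintro u v ⟨h, hn⟩
        exact ⟨h.symm, fun ⟨C, hC, hu, hv⟩ => hn ⟨C, hC, hv, hu⟩⟩
      loopless := ⟨fun v h => G.loopless.irrefl v h.1⟩ } with hH₁
  set H₂ : SimpleGraph V :=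
    { Adj := fun u v => u ≠ v ∧ ¬ G.Adj u v ∧ ∃ C ∈ P.parts, u ∈ C ∧ v ∈ C
      symm := by
        constructor
        rintro u v ⟨hne, h, C, hC, hu, hv⟩
        exact ⟨hne.symm, fun h' => h h'.symm, C, hC, hv, hu⟩
      loopless := ⟨fun v h => h.1 rfl⟩ } with hH₂
  have e1 : {e : Sym2 V | e ∈ G.edgeSet ∧ (∀ v ∈ e, v ∈ (univ : Finset V)) ∧
      ¬ ∃ C ∈ P.parts, ∀ v ∈ e, v ∈ C} = H₁.edgeSet := by
    ext e
    induction e with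
    | _ u v =>
      simp only [Set.mem_setOf_eq, SimpleGraph.mem_edgeSet, Sym2.mem_iff, hH₁]
      constructor
      · rintro ⟨ha, -, hn⟩
        exact ⟨ha, fun ⟨C, hC, hu, hv⟩ => hn ⟨C, hC, by rintro w (rfl | rfl) <;> assumption⟩⟩
      · rintro ⟨ha, hn⟩
        exact ⟨ha, by simp, fun ⟨C, hC, h⟩ => hn ⟨C, hC, h u (Or.inl rfl), h v (Or.inr rfl)⟩⟩
  have e2 : {e : Sym2 V | e ∈ Gᶜ.edgeSet ∧ ∃ C ∈ P.parts, ∀ v ∈ e, v ∈ C} = H₂.edgeSet := by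
    ext e
    induction e with
    | _ u v =>
      simp only [Set.mem_setOf_eq, SimpleGraph.mem_edgeSet, SimpleGraph.compl_adj, Sym2.mem_iff,
        hH₂]
      constructor
      · rintro ⟨⟨hne, ha⟩, C, hC, h⟩
        exact ⟨hne, ha, C, hC, h u (Or.inl rfl), h v (Or.inr rfl)⟩
      · rintro ⟨hne, ha, C, hC, hu, hv⟩
        exact ⟨⟨hne, ha⟩, C, hC, by rintro w (rfl | rfl) <;> assumption⟩
  have hc : cost G P = H₁.edgeFinset.card + H₂.edgeFinset.card := by
    rw [cost, costOn, e1, e2, SimpleGraph.edgeFinset, SimpleGraph.edgeFinset,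
      Set.ncard_eq_toFinset_card', Set.ncard_eq_toFinset_card']
  rw [hc, Nat.mul_add, SimpleGraph.two_mul_card_edgeFinset, SimpleGraph.two_mul_card_edgeFinset,
    Finset.card_filter, Finset.card_filter, Finset.card_filter, ← Finset.sum_add_distrib]
  refine Finset.sum_congr rfl fun p _ => ?_
  rcases p with ⟨u, v⟩
  dsimp only [hH₁, hH₂]
  by_cases hA : G.Adj u v <;> by_cases hT : ∃ C ∈ P.parts, u ∈ C ∧ v ∈ C <;>
    by_cases hne : u = v <;> simp_all

open Classical in
lemma sum_ind_mem {W : Type*} [DecidableEq W] {s : Finset W} (P : Finpartition s) (u v : W) :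
    ∑ C ∈ P.parts, (if u ∈ C ∧ v ∈ C then (1 : ℕ) else 0) =
      if ∃ C ∈ P.parts, u ∈ C ∧ v ∈ C then 1 else 0 := by
  classical
  rw [← Finset.card_filter]
  by_cases h : ∃ C ∈ P.parts, u ∈ C ∧ v ∈ C
  · obtain ⟨C, hC, hu, hv⟩ := h
    rw [if_pos ⟨C, hC, hu, hv⟩, Finset.card_eq_one]
    refine ⟨C, ?_⟩
    ext D
    simp only [Finset.mem_filter, Finset.mem_singleton]
    constructor
    · rintro ⟨hD, hu', hv'⟩
      exact P.eq_of_mem_parts hD hC hu' hu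
    · rintro rfl
      exact ⟨hC, hu, hv⟩
  · rw [if_neg h, Finset.card_eq_zero, Finset.filter_eq_empty_iff]
    intro C hC hmem
    exact h ⟨C, hC, hmem.1, hmem.2⟩

lemma card_inter_image {W γ : Type*} [DecidableEq W] [DecidableEq γ] (f : γ → W)
    (hf : Function.Injective f) (t : Finset γ) (C : Finset W) :
    (C ∩ t.image f).card = (t.filter fun a => f a ∈ C).card := by
  classical
  rw [← Finset.card_image_of_injective _ hf]
  congr 1
  ext w
  simp only [Finset.mem_inter, Finset.mem_image, Finset.mem_filter]
  constructor
  · rintro ⟨hw, a, ha, rfl⟩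
    exact ⟨a, ⟨ha, hw⟩, rfl⟩
  · rintro ⟨a, ⟨ha, hw⟩, rfl⟩
    exact ⟨hw, a, ha, rfl⟩

lemma restrict_mem_iff {γ W : Type*} [Fintype γ] [DecidableEq γ] [Fintype W] [DecidableEq W]
    (f : γ → W) (𝒞 : Finpartition (univ : Finset W)) (𝒟 : Finpartition (univ : Finset γ))
    (h : 𝒟.parts = (𝒞.parts.image fun C => (univ : Finset γ).filter fun x => f x ∈ C).erase ∅)
    (a a' : γ) :
    (∃ D ∈ 𝒟.parts, a ∈ D ∧ a' ∈ D) ↔ ∃ C ∈ 𝒞.parts, f a ∈ C ∧ f a' ∈ C := by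
  rw [h]
  constructor
  · rintro ⟨D, hD, ha, ha'⟩
    rw [Finset.mem_erase, Finset.mem_image] at hD
    obtain ⟨-, C, hC, rfl⟩ := hD
    rw [Finset.mem_filter] at ha ha'
    exact ⟨C, hC, ha.2, ha'.2⟩
  · rintro ⟨C, hC, ha, ha'⟩
    refine ⟨(univ : Finset γ).filter fun x => f x ∈ C, ?_, by simp [ha], by simp [ha']⟩
    rw [Finset.mem_erase]
    refine ⟨?_, Finset.mem_image_of_mem _ hC⟩
    intro hemp
    rw [Finset.eq_empty_iff_forall_notMem] at hemp
    exact hemp a (by simp [ha])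

lemma swap3 {A B P : Type*} (sA : Finset A) (sB : Finset B) (sP : Finset P)
    (f : A → P → ℕ) (g : B → P → ℕ) :
    ∑ a ∈ sA, ∑ b ∈ sB, ∑ p ∈ sP, f a p * g b p =
      ∑ p ∈ sP, (∑ a ∈ sA, f a p) * (∑ b ∈ sB, g b p) := by
  calc ∑ a ∈ sA, ∑ b ∈ sB, ∑ p ∈ sP, f a p * g b p
      = ∑ a ∈ sA, ∑ p ∈ sP, ∑ b ∈ sB, f a p * g b p :=
        Finset.sum_congr rfl fun a _ => Finset.sum_comm
    _ = ∑ p ∈ sP, ∑ a ∈ sA, ∑ b ∈ sB, f a p * g b p := Finset.sum_comm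
    _ = ∑ p ∈ sP, (∑ a ∈ sA, f a p) * (∑ b ∈ sB, g b p) :=
        Finset.sum_congr rfl fun p _ => (Finset.sum_mul_sum sA sB _ _).symm

end Aux

section NLCLemmas

variable {α β : Type*} {κ : ℕ} {G₁ : SimpleGraph α} {G₂ : SimpleGraph β}
  {lab₁ : α → Fin κ} {lab₂ : β → Fin κ} {S : Finset (Fin κ × Fin κ)}

lemma nlc_adj_inl_inl {a a' : α} :
    (nlcGraph G₁ G₂ lab₁ lab₂ S).Adj (Sum.inl a) (Sum.inl a') ↔ G₁.Adj a a' := Iff.rfl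

lemma nlc_adj_inr_inr {b b' : β} :
    (nlcGraph G₁ G₂ lab₁ lab₂ S).Adj (Sum.inr b) (Sum.inr b') ↔ G₂.Adj b b' := Iff.rfl

lemma nlc_adj_inl_inr {a : α} {b : β} :
    (nlcGraph G₁ G₂ lab₁ lab₂ S).Adj (Sum.inl a) (Sum.inr b) ↔ (lab₁ a, lab₂ b) ∈ S := Iff.rfl

lemma nlc_adj_inr_inl {a : α} {b : β} :
    (nlcGraph G₁ G₂ lab₁ lab₂ S).Adj (Sum.inr b) (Sum.inl a) ↔ (lab₁ a, lab₂ b) ∈ S := Iff.rfl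

end NLCLemmas

theorem statement18 {α β : Type*} [Fintype α] [Fintype β] [DecidableEq α] [DecidableEq β]
    {κ : ℕ} (G₁ : SimpleGraph α) (G₂ : SimpleGraph β)
    (lab₁ : α → Fin κ) (lab₂ : β → Fin κ) (S : Finset (Fin κ × Fin κ))
    (𝒞 : Finpartition (univ : Finset (α ⊕ β)))
    (𝒟₁ : Finpartition (univ : Finset α)) (𝒟₂ : Finpartition (univ : Finset β))
    (h₁ : 𝒟₁.parts =
      (𝒞.parts.image fun C => (univ : Finset α).filter fun x => Sum.inl x ∈ C).erase ∅)
    (h₂ : 𝒟₂.parts =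
      (𝒞.parts.image fun C => (univ : Finset β).filter fun x => Sum.inr x ∈ C).erase ∅) :
    cost (nlcGraph G₁ G₂ lab₁ lab₂ S) 𝒞 +
        2 * ∑ p ∈ S, ∑ C ∈ 𝒞.parts,
          (C ∩ ((univ : Finset α).filter fun x => lab₁ x = p.1).image Sum.inl).card *
            (C ∩ ((univ : Finset β).filter fun x => lab₂ x = p.2).image Sum.inr).card =
      cost G₁ 𝒟₁ + cost G₂ 𝒟₂ +
        (∑ C ∈ 𝒞.parts,
          (C ∩ (univ : Finset α).image Sum.inl).card *
            (C ∩ (univ : Finset β).image Sum.inr).card) +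
        ∑ p ∈ S,
          ((univ : Finset α).filter fun x => lab₁ x = p.1).card *
            ((univ : Finset β).filter fun x => lab₂ x = p.2).card := by
  classical
  set G : SimpleGraph (α ⊕ β) := nlcGraph G₁ G₂ lab₁ lab₂ S with hG
  set F : (α ⊕ β) → (α ⊕ β) → ℕ := fun u v =>
    if (G.Adj u v ∧ ¬ ∃ C ∈ 𝒞.parts, u ∈ C ∧ v ∈ C) ∨
       (u ≠ v ∧ ¬ G.Adj u v ∧ ∃ C ∈ 𝒞.parts, u ∈ C ∧ v ∈ C) then 1 else 0 with hF
  -- Step 1: split the doubled cost into four blocks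
  have hbig : 2 * cost G 𝒞 =
      (∑ a : α, ∑ a' : α, F (Sum.inl a) (Sum.inl a')) +
      (∑ a : α, ∑ b : β, F (Sum.inl a) (Sum.inr b)) +
      (∑ b : β, ∑ a : α, F (Sum.inr b) (Sum.inl a)) +
      (∑ b : β, ∑ b' : β, F (Sum.inr b) (Sum.inr b')) := by
    rw [two_mul_cost, Finset.card_filter, Fintype.sum_prod_type]
    simp only [Fintype.sum_sum_type, Finset.sum_add_distrib, hF]
    ring
  -- Step 2: the pure blocks are the costs of the restricted clusterings
  have hAA : (∑ a : α, ∑ a' : α, F (Sum.inl a) (Sum.inl a')) = 2 * cost G₁ 𝒟₁ := by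
    rw [two_mul_cost, Finset.card_filter, Fintype.sum_prod_type]
    refine Finset.sum_congr rfl fun a _ => Finset.sum_congr rfl fun a' _ => ?_
    have hiff := restrict_mem_iff (Sum.inl : α → α ⊕ β) 𝒞 𝒟₁ h₁ a a'
    have hadj : G.Adj (Sum.inl a) (Sum.inl a') ↔ G₁.Adj a a' := Iff.rfl
    have hne : (Sum.inl a : α ⊕ β) ≠ Sum.inl a' ↔ a ≠ a' := by simp
    simp only [hF]
    exact if_congr (or_congr (and_congr hadj (not_congr hiff.symm))
      (and_congr hne (and_congr (not_congr hadj) hiff.symm))) rfl rfl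
  have hBB : (∑ b : β, ∑ b' : β, F (Sum.inr b) (Sum.inr b')) = 2 * cost G₂ 𝒟₂ := by
    rw [two_mul_cost, Finset.card_filter, Fintype.sum_prod_type]
    refine Finset.sum_congr rfl fun b _ => Finset.sum_congr rfl fun b' _ => ?_
    have hiff := restrict_mem_iff (Sum.inr : β → α ⊕ β) 𝒞 𝒟₂ h₂ b b'
    have hadj : G.Adj (Sum.inr b) (Sum.inr b') ↔ G₂.Adj b b' := Iff.rfl
    have hne : (Sum.inr b : α ⊕ β) ≠ Sum.inr b' ↔ b ≠ b' := by simp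
    simp only [hF]
    exact if_congr (or_congr (and_congr hadj (not_congr hiff.symm))
      (and_congr hne (and_congr (not_congr hadj) hiff.symm))) rfl rfl
  -- Step 3: the two mixed blocks agree
  have hBA : (∑ b : β, ∑ a : α, F (Sum.inr b) (Sum.inl a)) =
      (∑ a : α, ∑ b : β, F (Sum.inl a) (Sum.inr b)) := by
    rw [Finset.sum_comm]
    refine Finset.sum_congr rfl fun a _ => Finset.sum_congr rfl fun b _ => ?_
    have hsw : (∃ C ∈ 𝒞.parts, (Sum.inr b : α ⊕ β) ∈ C ∧ (Sum.inl a : α ⊕ β) ∈ C) ↔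
        (∃ C ∈ 𝒞.parts, (Sum.inl a : α ⊕ β) ∈ C ∧ (Sum.inr b : α ⊕ β) ∈ C) :=
      ⟨fun ⟨C, hC, h1, h2⟩ => ⟨C, hC, h2, h1⟩, fun ⟨C, hC, h1, h2⟩ => ⟨C, hC, h2, h1⟩⟩
    have hadj1 : G.Adj (Sum.inr b) (Sum.inl a) ↔ (lab₁ a, lab₂ b) ∈ S := Iff.rfl
    have hadj2 : G.Adj (Sum.inl a) (Sum.inr b) ↔ (lab₁ a, lab₂ b) ∈ S := Iff.rfl
    have hne1 : (Sum.inr b : α ⊕ β) ≠ Sum.inl a ↔ True := by simp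
    have hne2 : (Sum.inl a : α ⊕ β) ≠ Sum.inr b ↔ True := by simp
    simp only [hF]
    exact if_congr (or_congr (and_congr (hadj1.trans hadj2.symm) (not_congr hsw))
      (and_congr (hne1.trans hne2.symm)
        (and_congr (not_congr (hadj1.trans hadj2.symm)) hsw))) rfl rfl
  -- Step 4: pointwise identity for the mixed block
  have hmix : ∀ (a : α) (b : β), F (Sum.inl a) (Sum.inr b) +
      2 * (if (lab₁ a, lab₂ b) ∈ S ∧ ∃ C ∈ 𝒞.parts, (Sum.inl a : α ⊕ β) ∈ C ∧
          (Sum.inr b : α ⊕ β) ∈ C then 1 else 0) =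
      (if (lab₁ a, lab₂ b) ∈ S then 1 else 0) +
      (if ∃ C ∈ 𝒞.parts, (Sum.inl a : α ⊕ β) ∈ C ∧ (Sum.inr b : α ⊕ β) ∈ C then 1 else 0) := by
    intro a b
    have hadj : G.Adj (Sum.inl a) (Sum.inr b) ↔ (lab₁ a, lab₂ b) ∈ S := Iff.rfl
    have hne : (Sum.inl a : α ⊕ β) ≠ Sum.inr b := by simp
    have hFab : F (Sum.inl a) (Sum.inr b) =
        if ((lab₁ a, lab₂ b) ∈ S ∧ ¬ ∃ C ∈ 𝒞.parts, (Sum.inl a : α ⊕ β) ∈ C ∧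
            (Sum.inr b : α ⊕ β) ∈ C) ∨
          (¬ (lab₁ a, lab₂ b) ∈ S ∧ ∃ C ∈ 𝒞.parts, (Sum.inl a : α ⊕ β) ∈ C ∧
            (Sum.inr b : α ⊕ β) ∈ C) then 1 else 0 := by
      simp only [hF]
      exact if_congr (or_congr (and_congr hadj Iff.rfl)
        ((and_iff_right hne).trans (and_congr (not_congr hadj) Iff.rfl))) rfl rfl
    rw [hFab]
    by_cases hS' : (lab₁ a, lab₂ b) ∈ S <;>
      by_cases hT : ∃ C ∈ 𝒞.parts, (Sum.inl a : α ⊕ β) ∈ C ∧ (Sum.inr b : α ⊕ β) ∈ C <;>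
      simp [hS', hT]
  have hMix : (∑ a : α, ∑ b : β, F (Sum.inl a) (Sum.inr b)) +
      2 * (∑ a : α, ∑ b : β, if (lab₁ a, lab₂ b) ∈ S ∧ ∃ C ∈ 𝒞.parts,
          (Sum.inl a : α ⊕ β) ∈ C ∧ (Sum.inr b : α ⊕ β) ∈ C then 1 else 0) =
      (∑ a : α, ∑ b : β, if (lab₁ a, lab₂ b) ∈ S then 1 else 0) +
      (∑ a : α, ∑ b : β, if ∃ C ∈ 𝒞.parts, (Sum.inl a : α ⊕ β) ∈ C ∧
          (Sum.inr b : α ⊕ β) ∈ C then 1 else 0) := by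
    simp only [Finset.mul_sum]
    rw [← Finset.sum_add_distrib, ← Finset.sum_add_distrib]
    refine Finset.sum_congr rfl fun a _ => ?_
    rw [← Finset.sum_add_distrib, ← Finset.sum_add_distrib]
    exact Finset.sum_congr rfl fun b _ => hmix a b
  -- Step 5: counting identities
  have hTc : (∑ a : α, ∑ b : β, if ∃ C ∈ 𝒞.parts, (Sum.inl a : α ⊕ β) ∈ C ∧
        (Sum.inr b : α ⊕ β) ∈ C then (1 : ℕ) else 0) =
      ∑ C ∈ 𝒞.parts, (C ∩ (univ : Finset α).image Sum.inl).card *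
        (C ∩ (univ : Finset β).image Sum.inr).card := by
    calc ∑ a : α, ∑ b : β, (if ∃ C ∈ 𝒞.parts, (Sum.inl a : α ⊕ β) ∈ C ∧
            (Sum.inr b : α ⊕ β) ∈ C then (1 : ℕ) else 0)
        = ∑ a : α, ∑ b : β, ∑ C ∈ 𝒞.parts,
            (if (Sum.inl a : α ⊕ β) ∈ C then (1 : ℕ) else 0) *
            (if (Sum.inr b : α ⊕ β) ∈ C then 1 else 0) := by
          refine Finset.sum_congr rfl fun a _ => Finset.sum_congr rfl fun b _ => ?_
          rw [← sum_ind_mem 𝒞 (Sum.inl a : α ⊕ β) (Sum.inr b : α ⊕ β)]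
          refine Finset.sum_congr rfl fun C _ => ?_
          by_cases h1 : (Sum.inl a : α ⊕ β) ∈ C <;>
            by_cases h2 : (Sum.inr b : α ⊕ β) ∈ C <;> simp [h1, h2]
      _ = ∑ C ∈ 𝒞.parts, (∑ a : α, if (Sum.inl a : α ⊕ β) ∈ C then (1 : ℕ) else 0) *
            (∑ b : β, if (Sum.inr b : α ⊕ β) ∈ C then 1 else 0) := swap3 _ _ _ _ _
      _ = ∑ C ∈ 𝒞.parts, (C ∩ (univ : Finset α).image Sum.inl).card *
            (C ∩ (univ : Finset β).image Sum.inr).card := by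
          refine Finset.sum_congr rfl fun C _ => ?_
          rw [card_inter_image Sum.inl Sum.inl_injective,
            card_inter_image Sum.inr Sum.inr_injective,
            Finset.card_filter, Finset.card_filter]
  have hSc : (∑ a : α, ∑ b : β, if (lab₁ a, lab₂ b) ∈ S then (1 : ℕ) else 0) =
      ∑ p ∈ S, ((univ : Finset α).filter fun x => lab₁ x = p.1).card *
        ((univ : Finset β).filter fun x => lab₂ x = p.2).card := by
    calc ∑ a : α, ∑ b : β, (if (lab₁ a, lab₂ b) ∈ S then (1 : ℕ) else 0)
        = ∑ a : α, ∑ b : β, ∑ p ∈ S,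
            (if lab₁ a = p.1 then (1 : ℕ) else 0) * (if lab₂ b = p.2 then 1 else 0) := by
          refine Finset.sum_congr rfl fun a _ => Finset.sum_congr rfl fun b _ => ?_
          rw [← Finset.sum_ite_eq S (lab₁ a, lab₂ b) (fun _ => (1 : ℕ))]
          refine Finset.sum_congr rfl fun p _ => ?_
          by_cases h1 : lab₁ a = p.1 <;> by_cases h2 : lab₂ b = p.2 <;>
            simp [Prod.ext_iff, h1, h2]
      _ = ∑ p ∈ S, (∑ a : α, if lab₁ a = p.1 then (1 : ℕ) else 0) *
            (∑ b : β, if lab₂ b = p.2 then 1 else 0) := swap3 _ _ _ _ _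
      _ = ∑ p ∈ S, ((univ : Finset α).filter fun x => lab₁ x = p.1).card *
            ((univ : Finset β).filter fun x => lab₂ x = p.2).card := by
          refine Finset.sum_congr rfl fun p _ => ?_
          rw [Finset.card_filter, Finset.card_filter]
  have hW : (∑ a : α, ∑ b : β, if (lab₁ a, lab₂ b) ∈ S ∧ ∃ C ∈ 𝒞.parts,
        (Sum.inl a : α ⊕ β) ∈ C ∧ (Sum.inr b : α ⊕ β) ∈ C then (1 : ℕ) else 0) =
      ∑ p ∈ S, ∑ C ∈ 𝒞.parts,
        (C ∩ ((univ : Finset α).filter fun x => lab₁ x = p.1).image Sum.inl).card *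
        (C ∩ ((univ : Finset β).filter fun x => lab₂ x = p.2).image Sum.inr).card := by
    calc ∑ a : α, ∑ b : β, (if (lab₁ a, lab₂ b) ∈ S ∧ ∃ C ∈ 𝒞.parts,
            (Sum.inl a : α ⊕ β) ∈ C ∧ (Sum.inr b : α ⊕ β) ∈ C then (1 : ℕ) else 0)
        = ∑ a : α, ∑ b : β, ∑ q ∈ S ×ˢ 𝒞.parts,
            (if lab₁ a = q.1.1 ∧ (Sum.inl a : α ⊕ β) ∈ q.2 then (1 : ℕ) else 0) *
            (if lab₂ b = q.1.2 ∧ (Sum.inr b : α ⊕ β) ∈ q.2 then 1 else 0) := by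
          refine Finset.sum_congr rfl fun a _ => Finset.sum_congr rfl fun b _ => ?_
          rw [Finset.sum_product]
          have e1 : (if (lab₁ a, lab₂ b) ∈ S ∧ ∃ C ∈ 𝒞.parts,
              (Sum.inl a : α ⊕ β) ∈ C ∧ (Sum.inr b : α ⊕ β) ∈ C then (1 : ℕ) else 0) =
              (if (lab₁ a, lab₂ b) ∈ S then (1 : ℕ) else 0) *
              (if ∃ C ∈ 𝒞.parts, (Sum.inl a : α ⊕ β) ∈ C ∧
                (Sum.inr b : α ⊕ β) ∈ C then 1 else 0) := by
            by_cases h1 : (lab₁ a, lab₂ b) ∈ S <;>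
              by_cases h2 : ∃ C ∈ 𝒞.parts, (Sum.inl a : α ⊕ β) ∈ C ∧
                (Sum.inr b : α ⊕ β) ∈ C <;> simp [h1, h2]
          have e2 : (if (lab₁ a, lab₂ b) ∈ S then (1 : ℕ) else 0) =
              ∑ p ∈ S, (if lab₁ a = p.1 then (1 : ℕ) else 0) *
                (if lab₂ b = p.2 then 1 else 0) := by
            rw [← Finset.sum_ite_eq S (lab₁ a, lab₂ b) (fun _ => (1 : ℕ))]
            refine Finset.sum_congr rfl fun p _ => ?_
            by_cases h1 : lab₁ a = p.1 <;> by_cases h2 : lab₂ b = p.2 <;>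
              simp [Prod.ext_iff, h1, h2]
          have e3 : (if ∃ C ∈ 𝒞.parts, (Sum.inl a : α ⊕ β) ∈ C ∧
              (Sum.inr b : α ⊕ β) ∈ C then (1 : ℕ) else 0) =
              ∑ C ∈ 𝒞.parts, (if (Sum.inl a : α ⊕ β) ∈ C then (1 : ℕ) else 0) *
                (if (Sum.inr b : α ⊕ β) ∈ C then 1 else 0) := by
            rw [← sum_ind_mem 𝒞 (Sum.inl a : α ⊕ β) (Sum.inr b : α ⊕ β)]
            refine Finset.sum_congr rfl fun C _ => ?_
            by_cases h1 : (Sum.inl a : α ⊕ β) ∈ C <;>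
              by_cases h2 : (Sum.inr b : α ⊕ β) ∈ C <;> simp [h1, h2]
          rw [e1, e2, e3, Finset.sum_mul_sum]
          refine Finset.sum_congr rfl fun p _ => Finset.sum_congr rfl fun C _ => ?_
          by_cases h1 : lab₁ a = p.1 <;> by_cases h2 : lab₂ b = p.2 <;>
            by_cases h3 : (Sum.inl a : α ⊕ β) ∈ C <;>
            by_cases h4 : (Sum.inr b : α ⊕ β) ∈ C <;> simp [h1, h2, h3, h4]
      _ = ∑ q ∈ S ×ˢ 𝒞.parts,
            (∑ a : α, if lab₁ a = q.1.1 ∧ (Sum.inl a : α ⊕ β) ∈ q.2 then (1 : ℕ) else 0) *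
            (∑ b : β, if lab₂ b = q.1.2 ∧ (Sum.inr b : α ⊕ β) ∈ q.2 then 1 else 0) :=
          swap3 _ _ _ _ _
      _ = ∑ p ∈ S, ∑ C ∈ 𝒞.parts,
            (C ∩ ((univ : Finset α).filter fun x => lab₁ x = p.1).image Sum.inl).card *
            (C ∩ ((univ : Finset β).filter fun x => lab₂ x = p.2).image Sum.inr).card := by
          rw [Finset.sum_product]
          refine Finset.sum_congr rfl fun p _ => Finset.sum_congr rfl fun C _ => ?_
          rw [card_inter_image Sum.inl Sum.inl_injective,
            card_inter_image Sum.inr Sum.inr_injective,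
            Finset.filter_filter, Finset.filter_filter,
            Finset.card_filter, Finset.card_filter]
  omega
end ClusterEditing
end
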